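/- arXiv:1504.01866 — 6 statements merged into one kernel-verified Lean document; each statement's English description precedes it below -/
import Mathlib

section
/- Let F be a field with char F ≠ 2 and let n ∈ ℕ. For every g ∈ Sp_{2n}(F) with g² = 1 there exists a unique pair of natural numbers (p, q) with p + q = n such that g is conjugate by an element of Sp_{2n}(F) to the block matrix fromBlocks D 0 0 D, where D is the n×n diagonal matrix whose i-th diagonal entry (0-indexed) is 1 if i < p and −1 otherwise. (That is, every involution in Sp_{2n}(F) is Sp_{2n}(F)-conjugate to such a standard involution for exactly one pair (p,q).) -/
/-!
The form `ω(x, y) = xᵀ J y` on `F^{2n}` is alternating and nondegenerate, and an involution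
`g ∈ Sp_{2n}(F)` preserves it. As `2` is invertible, `F^{2n}` is the `ω`-orthogonal direct sum of
the eigenspaces `ker (g - 1)` and `ker (g + 1)`, so `ω` stays nondegenerate on each of them.
Merging Darboux bases of the two eigenspaces gives a basis of `F^{2n}` in which `ω` has Gram
matrix `J` and `g` is diagonal with entries `±1`; the change of basis is symplectic and
conjugates `g` to a standard involution. The pair `(p, q)` is unique because conjugation
preserves `rank (g - 1)`, which is `2 q` for the standard involution.
-/

/-- The `n × n` diagonal matrix with `p` ones followed by `n - p` minus-ones. -/
def stdDiag (F : Type*) [Field F] (n p : ℕ) : Matrix (Fin n) (Fin n) F :=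
  Matrix.diagonal fun i => if (i : ℕ) < p then 1 else -1

/-- The standard involution of `Sp_{2n}(F)` attached to a decomposition `n = p + q`. -/
def stdInvolution (F : Type*) [Field F] (n p : ℕ) :
    Matrix (Fin n ⊕ Fin n) (Fin n ⊕ Fin n) F :=
  Matrix.fromBlocks (stdDiag F n p) 0 0 (stdDiag F n p)

open Matrix Module

section LinearAlgebra

variable {K V : Type*} [Field K] [AddCommGroup V] [Module K V] {ι κ : Type*}

noncomputable def Module.Basis.ofIsCompl {U W : Submodule K V} (h : IsCompl U W)
    (bU : Basis ι K U) (bW : Basis κ K W) : Basis (ι ⊕ κ) K V :=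
  (bU.prod bW).map (Submodule.prodEquivOfIsCompl U W h)

@[simp]
lemma Module.Basis.ofIsCompl_inl {U W : Submodule K V} (h : IsCompl U W)
    (bU : Basis ι K U) (bW : Basis κ K W) (i : ι) :
    Basis.ofIsCompl h bU bW (.inl i) = bU i := by
  simp [Basis.ofIsCompl]

@[simp]
lemma Module.Basis.ofIsCompl_inr {U W : Submodule K V} (h : IsCompl U W)
    (bU : Basis ι K U) (bW : Basis κ K W) (k : κ) :
    Basis.ofIsCompl h bU bW (.inr k) = bW k := by
  simp [Basis.ofIsCompl]

lemma Module.End.isCompl_ker_sub_one_ker_add_one {f : Module.End K V} (hf : f * f = 1)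
    (h2 : (2 : K) ≠ 0) : IsCompl (LinearMap.ker (f - 1)) (LinearMap.ker (f + 1)) := by
  have hff (x : V) : f (f x) = x := congr($hf x)
  constructor
  · rw [Submodule.disjoint_def]
    intro x hx₁ hx₂
    simp only [LinearMap.mem_ker, LinearMap.sub_apply, LinearMap.add_apply, Module.End.one_apply,
      sub_eq_zero] at hx₁ hx₂
    have : (2 : K) • x = 0 := by rw [two_smul]; nth_rw 1 [← hx₁]; exact hx₂
    exact (smul_eq_zero.mp this).resolve_left h2
  · rw [codisjoint_iff, eq_top_iff]
    intro x _
    refine Submodule.mem_sup.mpr ⟨(2⁻¹ : K) • (x + f x), ?_, (2⁻¹ : K) • (x - f x), ?_, ?_⟩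
    · simp [hff, add_comm]
    · simp [hff]
    · rw [← smul_add, add_add_sub_cancel, ← two_smul K, smul_smul, inv_mul_cancel₀ h2, one_smul]

end LinearAlgebra

namespace LinearMap.BilinForm

variable {K V : Type*} [Field K] [AddCommGroup V] [Module K V]

def IsSymplecticBasis {ι : Type*} [DecidableEq ι] (B : LinearMap.BilinForm K V)
    (b : Basis (ι ⊕ ι) K V) : Prop :=
  ∀ i j, B (b i) (b j) = J ι K i j

variable {B : LinearMap.BilinForm K V} {ι κ : Type*}

lemma IsSymplecticBasis.reindex [DecidableEq ι] [DecidableEq κ] {b : Basis (ι ⊕ ι) K V}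
    (hb : B.IsSymplecticBasis b) (e : ι ≃ κ) :
    B.IsSymplecticBasis (b.reindex (e.sumCongr e)) := by
  rintro (i | i) (j | j) <;> simp [hb _ _, J, Matrix.one_apply]

lemma linearIndependent_of_apply_eq_J [Fintype ι] [DecidableEq ι] {v : ι ⊕ ι → V}
    (hv : ∀ i j, B (v i) (v j) = J ι K i j) : LinearIndependent K v := by
  rw [Fintype.linearIndependent_iff]
  intro c hc
  have hcJ : c ᵥ* J ι K = 0 := by
    ext j
    simpa [vecMul, dotProduct, hv, LinearMap.sum_apply] using congr_arg (B · (v j)) hc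
  have := congr_arg (· ᵥ* J ι K) hcJ
  rw [vecMul_vecMul, J_squared, vecMul_neg, vecMul_one, zero_vecMul, neg_eq_zero] at this
  exact congrFun this

lemma IsSymplecticBasis.nondegenerate [Fintype ι] [DecidableEq ι] {b : Basis (ι ⊕ ι) K V}
    (hb : B.IsSymplecticBasis b) : B.Nondegenerate := by
  have hJ : BilinForm.toMatrix b B = J ι K := by ext i j; simp [hb i j]
  rw [nondegenerate_iff_det_ne_zero b, hJ]
  exact (isUnit_det_J ι K).ne_zero

lemma nondegenerate_restrict_of_codisjoint (hB : B.IsRefl) (hnd : B.Nondegenerate)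
    {U W : Submodule K V} (hUW : Codisjoint U W) (horth : ∀ u ∈ U, ∀ w ∈ W, B u w = 0) :
    (B.restrict U).Nondegenerate := by
  refine (hB.domRestrict U).nondegenerate_iff_separatingLeft.mpr ?_
  refine separatingLeft_iff_ker_eq_bot.mpr ((ker_restrict_eq_of_codisjoint hUW horth).trans ?_)
  rw [hnd.ker_eq_bot, Submodule.comap_bot, Submodule.ker_subtype]

noncomputable def symplecticSum {U W : Submodule K V} (h : IsCompl U W)
    (bU : Basis (ι ⊕ ι) K U) (bW : Basis (κ ⊕ κ) K W) : Basis ((ι ⊕ κ) ⊕ (ι ⊕ κ)) K V :=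
  (Basis.ofIsCompl h bU bW).reindex (Equiv.sumSumSumComm ι ι κ κ)

lemma IsSymplecticBasis.symplecticSum [DecidableEq ι] [DecidableEq κ] (hB : B.IsRefl)
    {U W : Submodule K V} (h : IsCompl U W) (horth : ∀ u ∈ U, ∀ w ∈ W, B u w = 0)
    {bU : Basis (ι ⊕ ι) K U} {bW : Basis (κ ⊕ κ) K W}
    (hbU : (B.restrict U).IsSymplecticBasis bU) (hbW : (B.restrict W).IsSymplecticBasis bW) :
    B.IsSymplecticBasis (symplecticSum h bU bW) := by
  have horth' : ∀ w ∈ W, ∀ u ∈ U, B w u = 0 := fun w hw u hu => hB _ _ (horth u hu w hw)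
  have hU : ∀ i j, B (bU i) (bU j) = J ι K i j := hbU
  have hW : ∀ k l, B (bW k) (bW l) = J κ K k l := hbW
  rintro ((i | k) | (i | k)) ((j | l) | (j | l)) <;>
    simp [BilinForm.symplecticSum, horth, horth', hU, hW, J, Matrix.one_apply]

lemma exists_isSymplecticBasis_restrict_of_nontrivial [Nontrivial V] (hB : B.IsAlt)
    (hnd : B.Nondegenerate) :
    ∃ (W : Submodule K V) (b : Basis (Unit ⊕ Unit) K W), (B.restrict W).IsSymplecticBasis b := by
  obtain ⟨x, hx⟩ := exists_ne (0 : V)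
  obtain ⟨y, hxy⟩ : ∃ y, B x y ≠ 0 := by
    by_contra! h
    exact hx (hnd.1 x h)
  -- the sign matches the `-1` in the upper-right block of `J`
  set v : Unit ⊕ Unit → V := Sum.elim (fun _ => x) (fun _ => -(B x y)⁻¹ • y)
  have hv : ∀ i j, B (v i) (v j) = J Unit K i j := by
    have hyx : B y x = -B x y := (LinearMap.IsAlt.neg hB x y).symm
    rintro (_ | _) (_ | _) <;> simp [v, J, hB.self_eq_zero, hyx, hxy]
  exact ⟨_, Basis.span (linearIndependent_of_apply_eq_J hv), fun i j => by simp [hv]⟩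

theorem exists_isSymplecticBasis [FiniteDimensional K V] (hB : B.IsAlt) (hnd : B.Nondegenerate) :
    ∃ (ι : Type) (_ : Fintype ι) (_ : DecidableEq ι) (b : Basis (ι ⊕ ι) K V),
      B.IsSymplecticBasis b := by
  induction h : finrank K V using Nat.strong_induction_on generalizing V with
  | _ d ih =>
  cases subsingleton_or_nontrivial V
  · exact ⟨Empty, inferInstance, inferInstance, Basis.empty V, fun i => isEmptyElim i⟩
  obtain ⟨W, bW, hbW⟩ := exists_isSymplecticBasis_restrict_of_nontrivial hB hnd
  set O := B.orthogonal W
  have hWO : IsCompl W O :=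
    isCompl_orthogonal_of_restrict_nondegenerate hB.isRefl hbW.nondegenerate
  have horth : ∀ w ∈ W, ∀ u ∈ O, B w u = 0 := fun w hw u hu => hu w hw
  have hndO : (B.restrict O).Nondegenerate :=
    nondegenerate_restrict_of_codisjoint hB.isRefl hnd hWO.symm.codisjoint
      fun u hu w hw => hB.isRefl _ _ (hu w hw)
  have hdimO : finrank K O < d := by
    have := Submodule.finrank_add_eq_of_isCompl hWO
    rw [finrank_eq_card_basis bW] at this
    simp only [Fintype.card_sum, Fintype.card_unique, Nat.reduceAdd] at this
    omega
  obtain ⟨ι, _, _, bO, hbO⟩ := ih _ hdimO (B := B.restrict O) (fun z => hB z) hndO rfl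
  exact ⟨Unit ⊕ ι, inferInstance, inferInstance, _, hbW.symplecticSum hB.isRefl hWO horth hbO⟩

variable {f : Module.End K V}

lemma apply_eq_zero_of_mem_ker_sub_one_of_mem_ker_add_one
    (hf : ∀ x y, B (f x) (f y) = B x y) (h2 : (2 : K) ≠ 0) {x y : V}
    (hx : x ∈ LinearMap.ker (f - 1)) (hy : y ∈ LinearMap.ker (f + 1)) : B x y = 0 := by
  simp only [LinearMap.mem_ker, LinearMap.sub_apply, LinearMap.add_apply, Module.End.one_apply,
    sub_eq_zero, add_eq_zero_iff_eq_neg] at hx hy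
  have := hf x y
  rw [hx, hy, map_neg, neg_eq_iff_add_eq_zero, ← two_mul] at this
  exact (mul_eq_zero.mp this).resolve_left h2

theorem exists_isSymplecticBasis_of_involutive [FiniteDimensional K V] (hB : B.IsAlt)
    (hnd : B.Nondegenerate) (h2 : (2 : K) ≠ 0) (hf : ∀ x y, B (f x) (f y) = B x y)
    (hff : f * f = 1) :
    ∃ (ι κ : Type) (_ : Fintype ι) (_ : DecidableEq ι) (_ : Fintype κ) (_ : DecidableEq κ)
      (b : Basis ((ι ⊕ κ) ⊕ (ι ⊕ κ)) K V), B.IsSymplecticBasis b ∧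
      ∀ k, f (b k) = Sum.elim (Sum.elim (1 : ι → K) (-1 : κ → K)) (Sum.elim 1 (-1)) k • b k := by
  set U := LinearMap.ker (f - 1)
  set W := LinearMap.ker (f + 1)
  have hUW : IsCompl U W := Module.End.isCompl_ker_sub_one_ker_add_one hff h2
  have horth : ∀ u ∈ U, ∀ w ∈ W, B u w = 0 := fun u hu w hw =>
    apply_eq_zero_of_mem_ker_sub_one_of_mem_ker_add_one hf h2 hu hw
  obtain ⟨ι, _, _, bU, hbU⟩ := exists_isSymplecticBasis (B := B.restrict U) (fun z => hB z)
    (nondegenerate_restrict_of_codisjoint hB.isRefl hnd hUW.codisjoint horth)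
  obtain ⟨κ, _, _, bW, hbW⟩ := exists_isSymplecticBasis (B := B.restrict W) (fun z => hB z)
    (nondegenerate_restrict_of_codisjoint hB.isRefl hnd hUW.symm.codisjoint
      fun w hw u hu => hB.isRefl _ _ (horth u hu w hw))
  have hfU (u : U) : f u = u := by
    have := LinearMap.mem_ker.mp u.2
    rwa [LinearMap.sub_apply, Module.End.one_apply, sub_eq_zero] at this
  have hfW (w : W) : f w = -w := by
    have := LinearMap.mem_ker.mp w.2
    rwa [LinearMap.add_apply, Module.End.one_apply, add_eq_zero_iff_eq_neg] at this
  refine ⟨ι, κ, inferInstance, inferInstance, inferInstance, inferInstance,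
    symplecticSum hUW bU bW, hbU.symplecticSum hB.isRefl hUW horth hbW, ?_⟩
  rintro ((i | k) | (i | k)) <;> simp [symplecticSum, hfU, hfW]

end LinearMap.BilinForm

section Matrix

variable {K : Type*} [Field K] {ι : Type*} [Fintype ι] [DecidableEq ι]

lemma isAlt_toBilin'_J : (toBilin' (J ι K)).IsAlt := by
  intro x
  simp [toBilin'_apply', J, fromBlocks_mulVec, dotProduct, Fintype.sum_sum_type, neg_mulVec,
    mul_comm]

lemma isSymplecticBasis_basisFun :
    (toBilin' (J ι K)).IsSymplecticBasis (Pi.basisFun K (ι ⊕ ι)) :=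
  fun i j => by simp [toBilin'_single]

lemma toBilin'_J_mulVec_mulVec {g : Matrix (ι ⊕ ι) (ι ⊕ ι) K} (hg : g ∈ symplecticGroup ι K)
    (x y : ι ⊕ ι → K) : toBilin' (J ι K) (g *ᵥ x) (g *ᵥ y) = toBilin' (J ι K) x y := by
  have := toBilin'_comp (J ι K) g g
  rw [SymplecticGroup.mem_iff'.mp hg] at this
  exact congr($this x y)

lemma LinearMap.BilinForm.IsSymplecticBasis.toMatrix_mem_symplecticGroup
    {b : Basis (ι ⊕ ι) K (ι ⊕ ι → K)} (hb : (toBilin' (J ι K)).IsSymplecticBasis b) :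
    b.toMatrix (Pi.basisFun K (ι ⊕ ι)) ∈ symplecticGroup ι K := by
  have hJ : LinearMap.BilinForm.toMatrix b (toBilin' (J ι K)) = J ι K := by
    ext i j; simp [hb i j]
  have := LinearMap.BilinForm.toMatrix_mul_basis_toMatrix b (Pi.basisFun K (ι ⊕ ι))
    (toBilin' (J ι K))
  rwa [hJ, LinearMap.BilinForm.toMatrix_basisFun, LinearMap.BilinForm.toMatrix'_toBilin',
    ← SymplecticGroup.mem_iff'] at this

lemma Module.Basis.toMatrix_basisFun_conj_eq_diagonal (b : Basis ι K (ι → K))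
    {A : Matrix ι ι K} {d : ι → K} (h : ∀ k, A *ᵥ b k = d k • b k) :
    b.toMatrix (Pi.basisFun K ι) * A * (b.toMatrix (Pi.basisFun K ι))⁻¹ = diagonal d := by
  rw [inv_eq_right_inv (b.toMatrix_mul_toMatrix_flip _), ← LinearMap.toMatrix'_toLin' A,
    ← LinearMap.toMatrix_eq_toMatrix', basis_toMatrix_mul_linearMap_toMatrix_mul_basis_toMatrix]
  ext i j
  by_cases hij : i = j <;> simp [LinearMap.toMatrix_apply, h, hij]

lemma rank_conj_sub_one {s g : Matrix ι ι K} (hs : IsUnit s.det) :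
    (s * g * s⁻¹ - 1).rank = (g - 1).rank := by
  rw [show s * g * s⁻¹ - 1 = s * (g - 1) * s⁻¹ by
      rw [mul_sub, sub_mul, mul_one, mul_nonsing_inv _ hs],
    rank_mul_eq_left_of_isUnit_det _ _ (isUnit_nonsing_inv_det _ hs),
    rank_mul_eq_right_of_isUnit_det _ _ hs]

end Matrix

lemma Fin.card_subtype_le_val (n p : ℕ) : Nat.card {i : Fin n // p ≤ (i : ℕ)} = n - p := by
  rw [Nat.card_eq_fintype_card, Fintype.card_subtype]
  simp_rw [← not_lt]
  rw [Finset.filter_not, Finset.card_sdiff_of_subset (Finset.filter_subset _ _),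
    Fin.card_filter_val_lt, Finset.card_univ, Fintype.card_fin]
  omega

section StdInvolution

variable {F : Type*} [Field F] {n p : ℕ}

def stdSigns (F : Type*) [Field F] (n p : ℕ) : Fin n → F :=
  fun i => if (i : ℕ) < p then 1 else -1

lemma stdInvolution_eq_diagonal :
    stdInvolution F n p = diagonal (Sum.elim (stdSigns F n p) (stdSigns F n p)) := by
  rw [stdInvolution, stdDiag, fromBlocks_diagonal]
  rfl

lemma stdSigns_sub_one_ne_zero_iff (h2 : (2 : F) ≠ 0) (i : Fin n) :
    stdSigns F n p i - 1 ≠ 0 ↔ p ≤ i := by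
  unfold stdSigns
  split_ifs with hi
  · simpa using hi
  · simpa [← neg_add', one_add_one_eq_two, h2] using hi

lemma rank_stdInvolution_sub_one (h2 : (2 : F) ≠ 0) :
    (stdInvolution F n p - 1).rank = 2 * (n - p) := by
  classical
  rw [stdInvolution_eq_diagonal, ← diagonal_one, diagonal_sub, rank_diagonal,
    Fintype.card_eq_nat_card, Nat.card_congr Equiv.subtypeSum, Nat.card_sum]
  simp only [Sum.elim_inl, Sum.elim_inr]
  rw [Nat.card_congr (Equiv.subtypeEquivRight (stdSigns_sub_one_ne_zero_iff h2)),
    Fin.card_subtype_le_val]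
  ring

theorem exists_mem_symplecticGroup_conj_eq_stdInvolution (h2 : (2 : F) ≠ 0)
    {g : Matrix (Fin n ⊕ Fin n) (Fin n ⊕ Fin n) F} (hg : g ∈ symplecticGroup (Fin n) F)
    (hinv : g ^ 2 = 1) :
    ∃ p ≤ n, ∃ s ∈ symplecticGroup (Fin n) F, s * g * s⁻¹ = stdInvolution F n p := by
  obtain ⟨ι, κ, _, _, _, _, b, hb, hgb⟩ :=
    LinearMap.BilinForm.exists_isSymplecticBasis_of_involutive isAlt_toBilin'_J
      isSymplecticBasis_basisFun.nondegenerate h2 (f := toLin' g) (toBilin'_J_mulVec_mulVec hg)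
      (by rw [Module.End.mul_eq_comp, ← toLin'_mul, ← sq, hinv, toLin'_one,
        Module.End.one_eq_id])
  simp only [toLin'_apply] at hgb
  have hcard : Fintype.card ι + Fintype.card κ = n := by
    have := finrank_eq_card_basis b
    simp only [finrank_fintype_fun_eq_card, Fintype.card_sum, Fintype.card_fin] at this
    omega
  subst hcard
  set e := ((Fintype.equivFin ι).sumCongr (Fintype.equivFin κ)).trans finSumFinEquiv
  refine ⟨Fintype.card ι, by omega, _, (hb.reindex e).toMatrix_mem_symplecticGroup, ?_⟩
  rw [stdInvolution_eq_diagonal]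
  refine Basis.toMatrix_basisFun_conj_eq_diagonal _ fun k => ?_
  obtain ⟨x, rfl⟩ := (e.sumCongr e).surjective k
  rcases x with ((i | k) | (i | k)) <;> simp [e, hgb, stdSigns]

end StdInvolution

/-- Every involution in `Sp_{2n}(F)` is `Sp_{2n}(F)`-conjugate to a standard involution
`fromBlocks D 0 0 D` for a unique pair `(p, q)` with `p + q = n`. -/
theorem involution_conj_stdInvolution_existsUnique
    (F : Type*) [Field F] (hchar : ringChar F ≠ 2) (n : ℕ)
    (g : Matrix (Fin n ⊕ Fin n) (Fin n ⊕ Fin n) F)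
    (hg : g ∈ Matrix.symplecticGroup (Fin n) F) (hinv : g ^ 2 = 1) :
    ∃! pq : ℕ × ℕ, pq.1 + pq.2 = n ∧
      ∃ s ∈ Matrix.symplecticGroup (Fin n) F,
        s * g * s⁻¹ = stdInvolution F n pq.1 := by
  have h2 : (2 : F) ≠ 0 := Ring.two_ne_zero hchar
  obtain ⟨p, hp, s, hs, hconj⟩ := exists_mem_symplecticGroup_conj_eq_stdInvolution h2 hg hinv
  refine ⟨(p, n - p), ⟨by omega, s, hs, hconj⟩, ?_⟩
  rintro ⟨p', q'⟩ ⟨hpq', s', hs', hconj'⟩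
  have hrank := rank_stdInvolution_sub_one (n := n) (p := p) h2
  have hrank' := rank_stdInvolution_sub_one (n := n) (p := p') h2
  rw [← hconj, rank_conj_sub_one (SymplecticGroup.symplectic_det hs)] at hrank
  rw [← hconj', rank_conj_sub_one (SymplecticGroup.symplectic_det hs')] at hrank'
  simp only [Prod.mk.injEq]
  omega
end

section
/- Let F be a field with char F ≠ 2 and let n ∈ ℕ. If g₁, g₂ ∈ Sp_{2n}(F) satisfy g₁² = g₂² = 1 and there exists h ∈ GL_{2n}(F) with g₂ = h · g₁ · h⁻¹, then there exists s ∈ Sp_{2n}(F) with g₂ = s · g₁ · s⁻¹. In other words, two involutions in Sp_{2n}(F) which are conjugate in GL_{2n}(F) are already conjugate in Sp_{2n}(F). -/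
/-!
A symplectic involution `g` (with `2 ≠ 0`) splits the space into its `±1`-eigenspaces, and the
`-1`-eigenspace is the orthogonal complement of the `+1`-eigenspace, so both are nondegenerate.
Nondegenerate alternating forms are classified by their dimension (Darboux: split off a hyperbolic
plane and induct on its orthogonal complement), and conjugacy in `GL` preserves the dimension of
the `+1`-eigenspace. Hence the eigenspaces of `g₁` and `g₂` are isometric, and the two
isometries glue to a symplectic map conjugating `g₁` to `g₂`.
-/

open Module Function Submodule

namespace Module.End

variable {F V W : Type*} [Field F] [AddCommGroup V] [Module F V] [AddCommGroup W] [Module F W]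
  {g : End F V}

lemma mem_ker_sub_one {x : V} : x ∈ LinearMap.ker (g - 1) ↔ g x = x := by
  simp [sub_eq_zero]

lemma mem_ker_add_one {x : V} : x ∈ LinearMap.ker (g + 1) ↔ g x = -x := by
  simp [add_eq_zero_iff_eq_neg]

lemma isCompl_ker_sub_one_ker_add_one_s1 (h2 : (2 : F) ≠ 0) (hg : Involutive g) :
    IsCompl (LinearMap.ker (g - 1)) (LinearMap.ker (g + 1)) := by
  refine ⟨disjoint_def.2 fun x hx hx' => ?_, codisjoint_iff.2 (eq_top_iff.2 fun x _ => ?_)⟩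
  · have : (2 : F) • x = 0 := by
      rw [two_smul]
      nth_rewrite 1 [← mem_ker_sub_one.1 hx]
      rw [mem_ker_add_one.1 hx', neg_add_cancel]
    exact (smul_eq_zero.1 this).resolve_left h2
  · refine Submodule.mem_sup.2 ⟨(2⁻¹ : F) • (x + g x), mem_ker_sub_one.2 ?_,
      (2⁻¹ : F) • (x - g x), mem_ker_add_one.2 ?_, ?_⟩
    · rw [map_smul, map_add, hg x, add_comm]
    · rw [map_smul, map_sub, hg x, ← smul_neg, neg_sub]
    · rw [← smul_add, add_add_sub_cancel, ← two_smul F, smul_smul, inv_mul_cancel₀ h2,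
        one_smul]

lemma map_ker_sub_one {g₁ : End F V} {g₂ : End F W} (e : V ≃ₗ[F] W)
    (he : ∀ x, e (g₁ x) = g₂ (e x)) :
    (LinearMap.ker (g₁ - 1)).map (e : V →ₗ[F] W) = LinearMap.ker (g₂ - 1) := by
  ext y
  rw [Submodule.mem_map_equiv, mem_ker_sub_one, mem_ker_sub_one, ← e.injective.eq_iff, he,
    e.apply_symm_apply]

end Module.End

namespace LinearMap.BilinForm

variable {F V W : Type*} [Field F] [AddCommGroup V] [Module F V] [AddCommGroup W] [Module F W]
  {B : LinearMap.BilinForm F V} {C : LinearMap.BilinForm F W}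

section OrthogonalSum

variable {P : Submodule F V} {Q : Submodule F W}

lemma apply_add_add_of_mem_orthogonal (hB : B.IsRefl) (a c : P) (b d : B.orthogonal P) :
    B (a + b) (c + d) = B a c + B b d := by
  have had : B a d = 0 := d.2 a a.2
  have hbc : B b c = 0 := hB _ _ (b.2 c c.2)
  simp only [map_add, LinearMap.add_apply, had, hbc, add_zero, zero_add]

noncomputable def IsometryEquiv.ofIsComplOrthogonal (hB : B.IsRefl) (hC : C.IsRefl)
    (hP : IsCompl P (B.orthogonal P)) (hQ : IsCompl Q (C.orthogonal Q))
    (φ₁ : (B.restrict P).IsometryEquiv (C.restrict Q))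
    (φ₂ : (B.restrict (B.orthogonal P)).IsometryEquiv (C.restrict (C.orthogonal Q))) :
    B.IsometryEquiv C where
  toLinearEquiv := (P.prodEquivOfIsCompl _ hP).symm ≪≫ₗ
    ((φ₁ : P ≃ₗ[F] Q).prodCongr (φ₂ : B.orthogonal P ≃ₗ[F] C.orthogonal Q) ≪≫ₗ
      Q.prodEquivOfIsCompl _ hQ)
  map_app' x y := by
    obtain ⟨⟨a, b⟩, rfl⟩ := (P.prodEquivOfIsCompl _ hP).surjective x
    obtain ⟨⟨c, d⟩, rfl⟩ := (P.prodEquivOfIsCompl _ hP).surjective y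
    simp only [LinearEquiv.toFun_eq_coe, LinearEquiv.trans_apply]
    rw [LinearEquiv.symm_apply_apply, LinearEquiv.symm_apply_apply]
    simp only [LinearEquiv.prodCongr_apply, coe_prodEquivOfIsCompl']
    rw [apply_add_add_of_mem_orthogonal hB, apply_add_add_of_mem_orthogonal hC]
    exact congrArg₂ (· + ·) (φ₁.map_app c a) (φ₂.map_app d b)

variable (hB : B.IsRefl) (hC : C.IsRefl) (hP : IsCompl P (B.orthogonal P))
  (hQ : IsCompl Q (C.orthogonal Q)) (φ₁ : (B.restrict P).IsometryEquiv (C.restrict Q))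
  (φ₂ : (B.restrict (B.orthogonal P)).IsometryEquiv (C.restrict (C.orthogonal Q)))

@[simp]
lemma IsometryEquiv.ofIsComplOrthogonal_apply_left (x : P) :
    IsometryEquiv.ofIsComplOrthogonal hB hC hP hQ φ₁ φ₂ x = φ₁ x := by
  rw [← coe_toLinearEquiv]
  simp [ofIsComplOrthogonal]

@[simp]
lemma IsometryEquiv.ofIsComplOrthogonal_apply_right (x : B.orthogonal P) :
    IsometryEquiv.ofIsComplOrthogonal hB hC hP hQ φ₁ φ₂ x = φ₂ x := by
  rw [← coe_toLinearEquiv]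
  simp [ofIsComplOrthogonal]

end OrthogonalSum

section Darboux

lemma equivalent_of_toMatrix_eq {ι : Type*} [Fintype ι] [DecidableEq ι] (b : Basis ι F V)
    (c : Basis ι F W) (h : toMatrix b B = toMatrix c C) : B.Equivalent C := by
  let e := b.equiv c (Equiv.refl ι)
  have hBC : C.compl₁₂ (e : V →ₗ[F] W) (e : V →ₗ[F] W) = B := by
    refine ext_basis b fun i j => ?_
    simpa [e, toMatrix_apply] using (congrFun₂ h i j).symm
  exact ⟨{ e with map_app' := fun x y => by rw [← hBC]; rfl }⟩

lemma exists_apply_eq_one [Nontrivial V] (hB : B.Nondegenerate) : ∃ v w, B v w = 1 := by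
  obtain ⟨v, hv⟩ := exists_ne (0 : V)
  obtain ⟨w, hw⟩ : ∃ w, B v w ≠ 0 := not_forall.1 fun h => hv (hB.1 v h)
  exact ⟨v, (B v w)⁻¹ • w, by rw [map_smul, smul_eq_mul, inv_mul_cancel₀ hw]⟩

variable {v w : V}

lemma IsAlt.linearIndependent_pair (hB : B.IsAlt) (hvw : B v w = 1) :
    LinearIndependent F ![v, w] := by
  have hwv : B w v = -1 := by rw [← hB.neg_eq, hvw]
  refine LinearIndependent.pair_iff.2 fun a b h => ⟨?_, ?_⟩
  · simpa [hvw, hB.self_eq_zero] using congrArg (B · w) h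
  · simpa [hwv, hB.self_eq_zero] using congrArg (B · v) h

lemma IsAlt.toMatrix_restrict_span_pair (hB : B.IsAlt) (hvw : B v w = 1) :
    toMatrix (Basis.span (hB.linearIndependent_pair hvw)) (B.restrict (span F (Set.range ![v, w])))
      = !![0, 1; -1, 0] := by
  have hwv : B w v = -1 := by rw [← hB.neg_eq, hvw]
  ext i j
  fin_cases i <;> fin_cases j <;>
    simp [toMatrix_apply, Basis.span_apply, hvw, hwv, hB.self_eq_zero]

lemma IsAlt.restrict_span_pair_nondegenerate (hB : B.IsAlt) (hvw : B v w = 1) :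
    (B.restrict (span F (Set.range ![v, w]))).Nondegenerate := by
  rw [nondegenerate_iff_det_ne_zero (Basis.span (hB.linearIndependent_pair hvw)),
    hB.toMatrix_restrict_span_pair hvw]
  simp

lemma IsAlt.equivalent_restrict_span_pair (hB : B.IsAlt) (hC : C.IsAlt) (hvw : B v w = 1)
    {v' w' : W} (hvw' : C v' w' = 1) :
    (B.restrict (span F (Set.range ![v, w]))).Equivalent
      (C.restrict (span F (Set.range ![v', w']))) :=
  equivalent_of_toMatrix_eq _ _
    ((hB.toMatrix_restrict_span_pair hvw).trans (hC.toMatrix_restrict_span_pair hvw').symm)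

lemma restrict_orthogonal_nondegenerate [FiniteDimensional F V] (hB : B.Nondegenerate)
    (hB₀ : B.IsRefl) {P : Submodule F V} (hP : (B.restrict P).Nondegenerate) :
    (B.restrict (B.orthogonal P)).Nondegenerate := by
  refine B.nondegenerate_restrict_of_disjoint_orthogonal hB₀ ?_
  rw [orthogonal_orthogonal hB hB₀]
  exact (isCompl_orthogonal_of_restrict_nondegenerate hB₀ hP).disjoint.symm

theorem IsAlt.equivalent_of_finrank_eq [FiniteDimensional F V] [FiniteDimensional F W]
    (hB : B.IsAlt) (hC : C.IsAlt) (hB' : B.Nondegenerate) (hC' : C.Nondegenerate)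
    (h : finrank F V = finrank F W) : B.Equivalent C := by
  induction hk : finrank F V using Nat.strong_induction_on generalizing V W with
  | _ k ih =>
  rcases k.eq_zero_or_pos with rfl | hpos
  · have : Subsingleton V := finrank_zero_iff.1 hk
    refine ⟨{ LinearEquiv.ofFinrankEq V W h with map_app' := fun x y => ?_ }⟩
    simp [Subsingleton.elim x 0]
  have : Nontrivial V := finrank_pos_iff.1 (hk ▸ hpos)
  have : Nontrivial W := finrank_pos_iff.1 (h ▸ hk ▸ hpos)
  obtain ⟨v, w, hvw⟩ := exists_apply_eq_one hB'
  obtain ⟨v', w', hvw'⟩ := exists_apply_eq_one hC'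
  set P := span F (Set.range ![v, w])
  set Q := span F (Set.range ![v', w'])
  have hP := hB.restrict_span_pair_nondegenerate hvw
  have hQ := hC.restrict_span_pair_nondegenerate hvw'
  have hPQ : finrank F (B.orthogonal P) = finrank F (C.orthogonal Q) := by
    rw [finrank_orthogonal hB', finrank_orthogonal hC', h,
      finrank_span_eq_card (hB.linearIndependent_pair hvw),
      finrank_span_eq_card (hC.linearIndependent_pair hvw')]
  have hlt : finrank F (B.orthogonal P) < k := by
    rw [finrank_orthogonal hB', hk, finrank_span_eq_card (hB.linearIndependent_pair hvw)]
    simp only [Fintype.card_fin]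
    omega
  obtain ⟨φ₁⟩ := hB.equivalent_restrict_span_pair hC hvw hvw'
  obtain ⟨φ₂⟩ := ih _ hlt (fun x => hB x.1) (fun x => hC x.1)
    (restrict_orthogonal_nondegenerate hB' hB.isRefl hP)
    (restrict_orthogonal_nondegenerate hC' hC.isRefl hQ) hPQ rfl
  exact ⟨.ofIsComplOrthogonal hB.isRefl hC.isRefl
    (isCompl_orthogonal_of_restrict_nondegenerate hB.isRefl hP)
    (isCompl_orthogonal_of_restrict_nondegenerate hC.isRefl hQ) φ₁ φ₂⟩

end Darboux

section Involution

open Module.End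

variable {g : Module.End F V}

lemma orthogonal_ker_sub_one (h2 : (2 : F) ≠ 0) (hB : B.Nondegenerate) (hg : Involutive g)
    (hgB : B.IsOrthogonal g) : B.orthogonal (LinearMap.ker (g - 1)) = LinearMap.ker (g + 1) := by
  ext y
  refine ⟨fun hy => mem_ker_add_one.2 ?_, fun hy x hx => ?_⟩
  · -- `B x (y + g y) = B (x + g x) y`, and `x + g x` is fixed by `g`
    refine eq_neg_of_add_eq_zero_right (hB.2 _ fun x => ?_)
    have hx : x + g x ∈ LinearMap.ker (g - 1) := by
      rw [mem_ker_sub_one, map_add, hg x, add_comm]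
    rw [map_add, ← hy _ hx, ← hgB x (g y), hg y, map_add, LinearMap.add_apply]
  · have : B x y = -B x y := calc
      B x y = B (g x) (g y) := (hgB x y).symm
      _ = -B x y := by rw [mem_ker_sub_one.1 hx, mem_ker_add_one.1 hy, map_neg]
    exact (mul_eq_zero.1 (by linear_combination this : (2 : F) * B x y = 0)).resolve_left h2

theorem exists_isometryEquiv_comm_of_involutive [FiniteDimensional F V] (h2 : (2 : F) ≠ 0)
    (hB : B.IsAlt) (hC : C.IsAlt) (hB' : B.Nondegenerate) (hC' : C.Nondegenerate)
    {g₁ : End F V} {g₂ : End F W} (hg₁ : Involutive g₁) (hg₂ : Involutive g₂)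
    (hg₁B : B.IsOrthogonal g₁) (hg₂C : C.IsOrthogonal g₂)
    (e : V ≃ₗ[F] W) (he : ∀ x, e (g₁ x) = g₂ (e x)) :
    ∃ φ : B.IsometryEquiv C, ∀ x, φ (g₁ x) = g₂ (φ x) := by
  have := e.finiteDimensional
  have hPQ : finrank F (LinearMap.ker (g₁ - 1)) = finrank F (LinearMap.ker (g₂ - 1)) := by
    rw [← map_ker_sub_one e he, e.finrank_map_eq]
  set P := LinearMap.ker (g₁ - 1)
  set Q := LinearMap.ker (g₂ - 1)
  have hPorth := orthogonal_ker_sub_one h2 hB' hg₁ hg₁B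
  have hQorth := orthogonal_ker_sub_one h2 hC' hg₂ hg₂C
  have hP : IsCompl P (B.orthogonal P) := hPorth ▸ isCompl_ker_sub_one_ker_add_one_s1 h2 hg₁
  have hQ : IsCompl Q (C.orthogonal Q) := hQorth ▸ isCompl_ker_sub_one_ker_add_one_s1 h2 hg₂
  have hPnd := (restrict_nondegenerate_iff_isCompl_orthogonal hB.isRefl).2 hP
  have hQnd := (restrict_nondegenerate_iff_isCompl_orthogonal hC.isRefl).2 hQ
  obtain ⟨φ₁⟩ :=
    IsAlt.equivalent_of_finrank_eq (fun x => hB x.1) (fun x => hC x.1) hPnd hQnd hPQ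
  obtain ⟨φ₂⟩ := IsAlt.equivalent_of_finrank_eq (fun x => hB x.1) (fun x => hC x.1)
    (restrict_orthogonal_nondegenerate hB' hB.isRefl hPnd)
    (restrict_orthogonal_nondegenerate hC' hC.isRefl hQnd)
    (by rw [finrank_orthogonal hB', finrank_orthogonal hC', e.finrank_eq, hPQ])
  refine ⟨.ofIsComplOrthogonal hB.isRefl hC.isRefl hP hQ φ₁ φ₂, fun x => ?_⟩
  obtain ⟨a, b, rfl⟩ : ∃ (a : P) (b : B.orthogonal P), (a : V) + b = x := by
    have hx : x ∈ P ⊔ B.orthogonal P := hP.sup_eq_top ▸ mem_top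
    obtain ⟨a, ha, b, hb, rfl⟩ := mem_sup.1 hx
    exact ⟨⟨a, ha⟩, ⟨b, hb⟩, rfl⟩
  have hb : g₁ b = -b := mem_ker_add_one.1 (hPorth ▸ b.2)
  have hφb : g₂ (φ₂ b) = -(φ₂ b : W) := mem_ker_add_one.1 (hQorth ▸ (φ₂ b).2)
  rw [map_add, mem_ker_sub_one.1 a.2, hb, map_add, map_neg, map_add, map_add,
    IsometryEquiv.ofIsComplOrthogonal_apply_left, IsometryEquiv.ofIsComplOrthogonal_apply_right,
    hφb, mem_ker_sub_one.1 (φ₁ a).2]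

end Involution

end LinearMap.BilinForm

namespace Matrix

variable {l R : Type*} [DecidableEq l] [Fintype l] [CommRing R]

lemma involutive_toLin' {n : Type*} [Fintype n] [DecidableEq n] {A : Matrix n n R}
    (hA : A ^ 2 = 1) : Involutive (toLin' A) := fun x => by
  rw [← toLin'_mul_apply, ← sq, hA, toLin'_one, LinearMap.id_apply]

lemma toBilin'_J_isAlt : (toBilin' (J l R)).IsAlt := fun x => by
  simp [toBilin'_apply', J, fromBlocks_mulVec, dotProduct, Fintype.sum_sum_type, neg_mulVec,
    mul_comm]

lemma toBilin'_J_nondegenerate [IsDomain R] : (toBilin' (J l R)).Nondegenerate :=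
  LinearMap.BilinForm.nondegenerate_toBilin'_of_det_ne_zero' _ (isUnit_det_J l R).ne_zero

lemma mem_symplecticGroup_iff_isOrthogonal {A : Matrix (l ⊕ l) (l ⊕ l) R} :
    A ∈ symplecticGroup l R ↔ (toBilin' (J l R)).IsOrthogonal (toLin' A) := by
  rw [SymplecticGroup.mem_iff', ← toBilin'.injective.eq_iff, ← toBilin'_comp,
    LinearMap.ext_iff₂]
  rfl

end Matrix

/-- Two involutions in `Sp_{2n}(F)` which are conjugate in `GL_{2n}(F)` are already
conjugate by an element of `Sp_{2n}(F)`. -/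
theorem involutions_GL_conjugate_imp_Sp_conjugate
    (F : Type*) [Field F] (hchar : ringChar F ≠ 2) (n : ℕ)
    (g₁ g₂ : Matrix (Fin n ⊕ Fin n) (Fin n ⊕ Fin n) F)
    (hg₁ : g₁ ∈ Matrix.symplecticGroup (Fin n) F)
    (hg₂ : g₂ ∈ Matrix.symplecticGroup (Fin n) F)
    (h₁ : g₁ ^ 2 = 1) (h₂ : g₂ ^ 2 = 1)
    (h : Matrix (Fin n ⊕ Fin n) (Fin n ⊕ Fin n) F) (hh : IsUnit h)
    (hconj : g₂ = h * g₁ * h⁻¹) :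
    ∃ s ∈ Matrix.symplecticGroup (Fin n) F, g₂ = s * g₁ * s⁻¹ := by
  have hdet : IsUnit h.det := (Matrix.isUnit_iff_isUnit_det h).1 hh
  have hhg : h * g₁ = g₂ * h := by rw [hconj, Matrix.nonsing_inv_mul_cancel_right _ _ hdet]
  obtain ⟨φ, hφ⟩ := LinearMap.BilinForm.exists_isometryEquiv_comm_of_involutive
    (Ring.two_ne_zero hchar) Matrix.toBilin'_J_isAlt Matrix.toBilin'_J_isAlt
    Matrix.toBilin'_J_nondegenerate Matrix.toBilin'_J_nondegenerate
    (Matrix.involutive_toLin' h₁) (Matrix.involutive_toLin' h₂)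
    (Matrix.mem_symplecticGroup_iff_isOrthogonal.1 hg₁)
    (Matrix.mem_symplecticGroup_iff_isOrthogonal.1 hg₂)
    (Matrix.toLinearEquiv' h hh.invertible) fun x => by
      change Matrix.toLin' h (Matrix.toLin' g₁ x) = Matrix.toLin' g₂ (Matrix.toLin' h x)
      rw [← Matrix.toLin'_mul_apply, ← Matrix.toLin'_mul_apply, hhg]
  set s := LinearMap.toMatrix' φ.toLinearEquiv.toLinearMap
  have hs : s ∈ Matrix.symplecticGroup (Fin n) F := by
    rw [Matrix.mem_symplecticGroup_iff_isOrthogonal, Matrix.toLin'_toMatrix']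
    exact fun x y => φ.map_app y x
  have hsg : s * g₁ = g₂ * s :=
    Matrix.toLin'.injective (LinearMap.ext fun x => by simpa [s, Matrix.toLin'_mul] using hφ x)
  refine ⟨s, hs, ?_⟩
  rw [hsg, Matrix.mul_nonsing_inv_cancel_right _ _ (SymplecticGroup.symplectic_det hs)]
end

section
/- Let F be a field with char F ≠ 2, let p, q ∈ ℕ and set n = p + q. Let D be the n×n diagonal matrix whose i-th diagonal entry (0-indexed) is 1 if i < p and −1 otherwise, and let d = fromBlocks D 0 0 D ∈ Sp_{2n}(F). Then the centralizer {g ∈ Sp_{2n}(F) : g·d = d·g} of d in Sp_{2n}(F) is isomorphic as a group to the direct product Sp_{2p}(F) × Sp_{2q}(F). -/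
open Matrix

namespace CentralizerAux

/-- The index reshuffle sending `Fin (p+q) ⊕ Fin (p+q)` to
`(Fin p ⊕ Fin p) ⊕ (Fin q ⊕ Fin q)`. -/
def eIdx (p q : ℕ) : (Fin (p + q) ⊕ Fin (p + q)) ≃ ((Fin p ⊕ Fin p) ⊕ (Fin q ⊕ Fin q)) :=
  (Equiv.sumCongr finSumFinEquiv.symm finSumFinEquiv.symm).trans
    (Equiv.sumSumSumComm (Fin p) (Fin q) (Fin p) (Fin q))

variable {p q : ℕ}

lemma eIdx_symm_a (a : Fin p) :
    (eIdx p q).symm (Sum.inl (Sum.inl a)) = Sum.inl (Fin.castAdd q a) := by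
  simp [eIdx, Equiv.sumSumSumComm, finSumFinEquiv]

lemma eIdx_symm_b (a : Fin p) :
    (eIdx p q).symm (Sum.inl (Sum.inr a)) = Sum.inr (Fin.castAdd q a) := by
  simp [eIdx, Equiv.sumSumSumComm, finSumFinEquiv]

lemma eIdx_symm_c (b : Fin q) :
    (eIdx p q).symm (Sum.inr (Sum.inl b)) = Sum.inl (Fin.natAdd p b) := by
  simp [eIdx, Equiv.sumSumSumComm, finSumFinEquiv]

lemma eIdx_symm_d (b : Fin q) :
    (eIdx p q).symm (Sum.inr (Sum.inr b)) = Sum.inr (Fin.natAdd p b) := by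
  simp [eIdx, Equiv.sumSumSumComm, finSumFinEquiv]

/-- The block-diagonal symplectic form. -/
def JJ (F : Type*) [Field F] (p q : ℕ) : Matrix ((Fin p ⊕ Fin p) ⊕ (Fin q ⊕ Fin q)) ((Fin p ⊕ Fin p) ⊕ (Fin q ⊕ Fin q)) F :=
  Matrix.fromBlocks (Matrix.J (Fin p) F) 0 0 (Matrix.J (Fin q) F)

/-- The reshuffled standard involution. -/
def DD (F : Type*) [Field F] (p q : ℕ) : Matrix ((Fin p ⊕ Fin p) ⊕ (Fin q ⊕ Fin q)) ((Fin p ⊕ Fin p) ⊕ (Fin q ⊕ Fin q)) F :=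
  Matrix.fromBlocks 1 0 0 (-1)

lemma reindex_J (F : Type*) [Field F] (p q : ℕ) :
    Matrix.reindex (eIdx p q) (eIdx p q) (Matrix.J (Fin (p + q)) F) = JJ F p q := by
  ext i j
  rcases i with (a | a) <;> rcases a with a | a <;> rcases j with (b | b) <;>
      rcases b with b | b <;>
    simp [eIdx_symm_a, eIdx_symm_b, eIdx_symm_c, eIdx_symm_d, Matrix.J, JJ,
      Matrix.one_apply, Fin.ext_iff] <;>
    first
      | omega
      | (split <;> simp)

lemma reindex_inv (F : Type*) [Field F] (p q : ℕ) :
    Matrix.reindex (eIdx p q) (eIdx p q) (stdInvolution F (p + q) p) = DD F p q := by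
  ext i j
  rcases i with (a | a) <;> rcases a with a | a <;> rcases j with (b | b) <;>
      rcases b with b | b <;>
    simp [eIdx_symm_a, eIdx_symm_b, eIdx_symm_c, eIdx_symm_d, stdInvolution, stdDiag, DD,
      Matrix.diagonal_apply, Matrix.one_apply, Fin.ext_iff] <;>
    first
      | omega
      | (split <;> simp)

/-- A matrix commuting with `DD` is block-diagonal. -/
lemma comm_block {F : Type*} [Field F] {p q : ℕ} (hchar : ringChar F ≠ 2)
    {M : Matrix ((Fin p ⊕ Fin p) ⊕ (Fin q ⊕ Fin q)) ((Fin p ⊕ Fin p) ⊕ (Fin q ⊕ Fin q)) F}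
    (hM : M * DD F p q = DD F p q * M) :
    M = Matrix.fromBlocks M.toBlocks₁₁ 0 0 M.toBlocks₂₂ := by
  rw [← Matrix.fromBlocks_toBlocks M] at hM
  set A := M.toBlocks₁₁
  set B := M.toBlocks₁₂
  set C := M.toBlocks₂₁
  set D := M.toBlocks₂₂
  rw [DD, Matrix.fromBlocks_multiply, Matrix.fromBlocks_multiply] at hM
  simp only [Matrix.mul_one, Matrix.one_mul, Matrix.mul_zero, Matrix.zero_mul,
    Matrix.mul_neg, Matrix.neg_mul, add_zero, zero_add, Matrix.mul_zero] at hM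
  have h := Matrix.fromBlocks_inj.mp hM
  have hB : M.toBlocks₁₂ = 0 := by
    ext i j
    have := congrFun (congrFun h.2.1 i) j
    rw [Matrix.neg_apply] at this
    exact (Ring.eq_self_iff_eq_zero_of_char_ne_two hchar).mp this
  have hC : M.toBlocks₂₁ = 0 := by
    ext i j
    have := congrFun (congrFun h.2.2.1 i) j
    rw [Matrix.neg_apply] at this
    exact (Ring.eq_self_iff_eq_zero_of_char_ne_two hchar).mp this.symm
  conv_lhs => rw [← Matrix.fromBlocks_toBlocks M]
  rw [hB, hC]

/-- Block-diagonal matrices are symplectic for `JJ` iff each block is symplectic. -/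
lemma blockdiag_symp {F : Type*} [Field F] {p q : ℕ} (A : Matrix (Fin p ⊕ Fin p) (Fin p ⊕ Fin p) F)
    (B : Matrix (Fin q ⊕ Fin q) (Fin q ⊕ Fin q) F) :
    Matrix.fromBlocks A 0 0 B * JJ F p q * (Matrix.fromBlocks A 0 0 B)ᵀ = JJ F p q ↔
      (A ∈ Matrix.symplecticGroup (Fin p) F ∧ B ∈ Matrix.symplecticGroup (Fin q) F) := by
  rw [SymplecticGroup.mem_iff, SymplecticGroup.mem_iff, JJ, Matrix.fromBlocks_transpose,
    Matrix.fromBlocks_multiply, Matrix.fromBlocks_multiply]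
  simp only [Matrix.mul_zero, Matrix.zero_mul, Matrix.transpose_zero, add_zero, zero_add,
    Matrix.mul_zero]
  rw [Matrix.fromBlocks_inj]
  tauto

end CentralizerAux

open CentralizerAux

/-- The centralizer in `Sp_{2(p+q)}(F)` of the standard involution attached to `(p, q)`
is isomorphic, as a group, to `Sp_{2p}(F) × Sp_{2q}(F)`. -/
theorem centralizer_stdInvolution_mulEquiv_prod
    (F : Type*) [Field F] (hchar : ringChar F ≠ 2) (p q : ℕ)
    (d : Matrix.symplecticGroup (Fin (p + q)) F)
    (hd : (d : Matrix (Fin (p + q) ⊕ Fin (p + q)) (Fin (p + q) ⊕ Fin (p + q)) F) =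
      stdInvolution F (p + q) p) :
    Nonempty ((Subgroup.centralizer {d}) ≃*
      (Matrix.symplecticGroup (Fin p) F × Matrix.symplecticGroup (Fin q) F)) := by
  classical
  let Φ : Matrix (Fin (p + q) ⊕ Fin (p + q)) (Fin (p + q) ⊕ Fin (p + q)) F ≃ₐ[F]
      Matrix ((Fin p ⊕ Fin p) ⊕ (Fin q ⊕ Fin q)) ((Fin p ⊕ Fin p) ⊕ (Fin q ⊕ Fin q)) F :=
    Matrix.reindexAlgEquiv F F (eIdx p q)
  have hΦ : ∀ M, Φ M = Matrix.reindex (eIdx p q) (eIdx p q) M := fun M => rfl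
  have hΦT : ∀ M, Φ Mᵀ = (Φ M)ᵀ := by
    intro M
    simp [hΦ, Matrix.reindex_apply, Matrix.transpose_submatrix]
  have hΦJ : Φ (Matrix.J (Fin (p + q)) F) = JJ F p q := reindex_J F p q
  have hΦd : Φ (d : Matrix _ _ F) = DD F p q := by
    rw [hd]; exact reindex_inv F p q
  -- symplectic condition transferred along Φ
  have hmem : ∀ M : Matrix (Fin (p + q) ⊕ Fin (p + q)) (Fin (p + q) ⊕ Fin (p + q)) F,
      M ∈ Matrix.symplecticGroup (Fin (p + q)) F ↔
        Φ M * JJ F p q * (Φ M)ᵀ = JJ F p q := by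
    intro M
    rw [SymplecticGroup.mem_iff, ← hΦJ, ← hΦT, ← _root_.map_mul Φ, ← _root_.map_mul Φ]
    exact ⟨fun h => by rw [h], fun h => Φ.injective h⟩
  -- elements of the centralizer are block-diagonal after Φ
  have hblock : ∀ g : Subgroup.centralizer {d},
      Φ (g.1.1) = Matrix.fromBlocks (Φ g.1.1).toBlocks₁₁ 0 0 (Φ g.1.1).toBlocks₂₂ := by
    intro g
    apply comm_block hchar
    have hc := (Subgroup.mem_centralizer_iff.mp g.2) d (Set.mem_singleton d)
    have hm : (d : Matrix _ _ F) * g.1.1 = g.1.1 * (d : Matrix _ _ F) :=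
      Subtype.ext_iff.mp hc
    calc Φ g.1.1 * DD F p q = Φ g.1.1 * Φ (d : Matrix _ _ F) := by rw [hΦd]
      _ = Φ (g.1.1 * (d : Matrix _ _ F)) := (map_mul Φ _ _).symm
      _ = Φ ((d : Matrix _ _ F) * g.1.1) := by rw [hm]
      _ = Φ (d : Matrix _ _ F) * Φ g.1.1 := map_mul Φ _ _
      _ = DD F p q * Φ g.1.1 := by rw [hΦd]
  have hmemblocks : ∀ g : Subgroup.centralizer {d},
      (Φ g.1.1).toBlocks₁₁ ∈ Matrix.symplecticGroup (Fin p) F ∧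
      (Φ g.1.1).toBlocks₂₂ ∈ Matrix.symplecticGroup (Fin q) F := by
    intro g
    have h := (hmem g.1.1).mp g.1.2
    rw [hblock g] at h
    exact (blockdiag_symp _ _).mp h
  -- the inverse construction
  have hinvmem : ∀ s : Matrix.symplecticGroup (Fin p) F × Matrix.symplecticGroup (Fin q) F,
      Φ.symm (Matrix.fromBlocks s.1.1 0 0 s.2.1) ∈
        Matrix.symplecticGroup (Fin (p + q)) F := by
    intro s
    rw [hmem, AlgEquiv.apply_symm_apply, blockdiag_symp]
    exact ⟨s.1.2, s.2.2⟩
  have hinvcent : ∀ s : Matrix.symplecticGroup (Fin p) F × Matrix.symplecticGroup (Fin q) F,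
      (⟨Φ.symm (Matrix.fromBlocks s.1.1 0 0 s.2.1), hinvmem s⟩ :
        Matrix.symplecticGroup (Fin (p + q)) F) ∈ Subgroup.centralizer {d} := by
    intro s
    rw [Subgroup.mem_centralizer_iff]
    intro h hh
    rw [Set.mem_singleton_iff] at hh
    rw [hh]
    apply Subtype.ext
    rw [Submonoid.coe_mul, Submonoid.coe_mul]
    apply Φ.injective
    rw [_root_.map_mul Φ, _root_.map_mul Φ, AlgEquiv.apply_symm_apply, hΦd, DD,
      Matrix.fromBlocks_multiply, Matrix.fromBlocks_multiply]
    simp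
  refine ⟨{
    toFun := fun g => (⟨(Φ g.1.1).toBlocks₁₁, (hmemblocks g).1⟩,
      ⟨(Φ g.1.1).toBlocks₂₂, (hmemblocks g).2⟩)
    invFun := fun s => ⟨⟨Φ.symm (Matrix.fromBlocks s.1.1 0 0 s.2.1), hinvmem s⟩, hinvcent s⟩
    left_inv := ?_
    right_inv := ?_
    map_mul' := ?_ }⟩
  · intro g
    apply Subtype.ext; apply Subtype.ext
    show Φ.symm (Matrix.fromBlocks (Φ g.1.1).toBlocks₁₁ 0 0 (Φ g.1.1).toBlocks₂₂) = g.1.1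
    rw [← hblock g, AlgEquiv.symm_apply_apply]
  · intro s
    have : Φ (Φ.symm (Matrix.fromBlocks s.1.1 0 0 s.2.1)) =
        Matrix.fromBlocks s.1.1 0 0 s.2.1 := AlgEquiv.apply_symm_apply _ _
    refine Prod.ext ?_ ?_ <;> apply Subtype.ext
    · show (Φ (Φ.symm (Matrix.fromBlocks s.1.1 0 0 s.2.1))).toBlocks₁₁ = s.1.1
      rw [this, Matrix.toBlocks_fromBlocks₁₁]
    · show (Φ (Φ.symm (Matrix.fromBlocks s.1.1 0 0 s.2.1))).toBlocks₂₂ = s.2.1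
      rw [this, Matrix.toBlocks_fromBlocks₂₂]
  · intro g h
    have hgh : ((g * h : Subgroup.centralizer {d}) : Matrix.symplecticGroup (Fin (p + q)) F).1
        = g.1.1 * h.1.1 := rfl
    have hmul : Φ ((g * h : Subgroup.centralizer {d}) : Matrix.symplecticGroup (Fin (p + q)) F).1
        = Matrix.fromBlocks ((Φ g.1.1).toBlocks₁₁ * (Φ h.1.1).toBlocks₁₁) 0 0
            ((Φ g.1.1).toBlocks₂₂ * (Φ h.1.1).toBlocks₂₂) := by
      rw [hgh, _root_.map_mul Φ]
      conv_lhs => rw [hblock g, hblock h]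
      rw [Matrix.fromBlocks_multiply]
      simp
    refine Prod.ext ?_ ?_ <;> apply Subtype.ext
    · show (Φ ((g * h : Subgroup.centralizer {d}) :
          Matrix.symplecticGroup (Fin (p + q)) F).1).toBlocks₁₁ = _
      rw [hmul, Matrix.toBlocks_fromBlocks₁₁]; rfl
    · show (Φ ((g * h : Subgroup.centralizer {d}) :
          Matrix.symplecticGroup (Fin (p + q)) F).1).toBlocks₂₂ = _
      rw [hmul, Matrix.toBlocks_fromBlocks₂₂]; rfl
end

section
/- Fix d ∈ ℕ and R > 0, and let f : ℝ^d → ℂ be a smooth (infinitely differentiable) function. The following are equivalent: (1) for every r with 0 < r < R and every k ∈ ℕ there exists C > 0 such that ‖iteratedFDeriv ℝ k f v‖ ≤ C · exp(−r·‖v‖) for all v ∈ ℝ^d; (2) for every r with 0 < r < R, the function v ↦ f(v) · exp(r·√(1 + ‖v‖²)) is a Schwartz function on ℝ^d. -/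
/-!
The weight `⟨v⟩ = √(1 + ‖v‖²)` has temperate growth and satisfies `‖v‖ ≤ ⟨v⟩ ≤ 1 + ‖v‖`, so by
Faà di Bruno every derivative of `exp (s ⟨v⟩)` is bounded by a polynomial times `exp (s ⟨v⟩)`.
The Leibniz rule then transfers derivative bounds between `f` and `exp (± r ⟨v⟩) • f`. Working at the
intermediate rate `(r + R) / 2` leaves a spare factor `exp (-ε ‖v‖)`, which absorbs all the
polynomial losses.
-/

open Finset Function
open scoped Nat ContDiff SchwartzMap

section

variable {E F H : Type*} [NormedAddCommGroup E] [NormedSpace ℝ E]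
  [NormedAddCommGroup F] [NormedSpace ℝ F] [NormedAddCommGroup H] [InnerProductSpace ℝ H]

theorem exists_one_add_pow_mul_exp_le {s s' : ℝ} (hss' : s < s') (m : ℕ) :
    ∃ C, ∀ t : ℝ, 0 ≤ t → (1 + t) ^ m * Real.exp (s * t) ≤ C * Real.exp (s' * t) := by
  set ε := s' - s
  have hε : 0 < ε := sub_pos.2 hss'
  refine ⟨m ! * Real.exp ε / ε ^ m, fun t ht => ?_⟩
  have hpow : (ε * (1 + t)) ^ m / m ! ≤ Real.exp ε * Real.exp (ε * t) := by
    rw [← Real.exp_add, ← mul_one_add]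
    exact Real.pow_div_factorial_le_exp _ (by positivity) m
  have hpoly : (1 + t) ^ m ≤ m ! * Real.exp ε / ε ^ m * Real.exp (ε * t) := by
    rw [div_le_iff₀ (by positivity), mul_pow] at hpow
    rw [div_mul_eq_mul_div, le_div_iff₀ (by positivity)]
    linarith
  calc (1 + t) ^ m * Real.exp (s * t)
      ≤ m ! * Real.exp ε / ε ^ m * Real.exp (ε * t) * Real.exp (s * t) := by gcongr
    _ = m ! * Real.exp ε / ε ^ m * Real.exp (s' * t) := by
      rw [mul_assoc, ← Real.exp_add, ← add_mul, sub_add_cancel]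

theorem norm_iteratedFDeriv_smul_le_of_le {f : E → ℝ} {g : E → F} (hf : ContDiff ℝ ∞ f)
    (hg : ContDiff ℝ ∞ g) {n : ℕ} {x : E} {a b : ℝ} {A B : ℕ → ℝ}
    (hfA : ∀ i ≤ n, ‖iteratedFDeriv ℝ i f x‖ ≤ A i * a)
    (hgB : ∀ i ≤ n, ‖iteratedFDeriv ℝ i g x‖ ≤ B i * b) :
    ‖iteratedFDeriv ℝ n (fun y => f y • g y) x‖ ≤
      (∑ i ∈ range (n + 1), n.choose i * A i * B (n - i)) * (a * b) := by
  refine (norm_iteratedFDeriv_smul_le hf hg x (mod_cast le_top)).trans ?_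
  rw [Finset.sum_mul]
  refine Finset.sum_le_sum fun i hi => ?_
  have hin : i ≤ n := Nat.lt_succ_iff.1 (Finset.mem_range.1 hi)
  calc (n.choose i : ℝ) * ‖iteratedFDeriv ℝ i f x‖ * ‖iteratedFDeriv ℝ (n - i) g x‖
      ≤ n.choose i * (A i * a) * (B (n - i) * b) := by
        have := (norm_nonneg _).trans (hfA i hin)
        gcongr
        exacts [hfA i hin, hgB _ (Nat.sub_le n i)]
    _ = n.choose i * A i * B (n - i) * (a * b) := by ring

theorem Function.HasTemperateGrowth.norm_iteratedFDeriv_exp_le {u : E → ℝ}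
    (hu : u.HasTemperateGrowth) (n : ℕ) :
    ∃ (k : ℕ) (C : ℝ), 0 ≤ C ∧ ∀ N ≤ n, ∀ x,
      ‖iteratedFDeriv ℝ N (fun y => Real.exp (u y)) x‖ ≤ C * ((1 + ‖x‖) ^ k * Real.exp (u x)) := by
  obtain ⟨k, C, -, hC⟩ := hu.norm_iteratedFDeriv_le_uniform n
  set A := max 1 C
  refine ⟨k * n, n ! * A ^ n, by positivity, fun N hN x => ?_⟩
  set D := A * (1 + ‖x‖) ^ k
  have hD : 1 ≤ D :=
    one_le_mul_of_one_le_of_one_le (le_max_left _ _) (one_le_pow₀ (by simp))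
  have hexp : ∀ i ≤ N, ‖iteratedFDeriv ℝ i Real.exp (u x)‖ ≤ Real.exp (u x) := fun i _ => by
    rw [norm_iteratedFDeriv_eq_norm_iteratedDeriv, iteratedDeriv_eq_iterate,
      Real.iter_deriv_exp, Real.norm_of_nonneg (Real.exp_pos _).le]
  have huD : ∀ i, 1 ≤ i → i ≤ N → ‖iteratedFDeriv ℝ i u x‖ ≤ D ^ i := fun i hi hiN =>
    calc ‖iteratedFDeriv ℝ i u x‖ ≤ C * (1 + ‖x‖) ^ k := hC i (hiN.trans hN) x
      _ ≤ D := by unfold D; gcongr; exact le_max_right _ _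
      _ ≤ D ^ i := le_self_pow₀ hD (by omega)
  calc ‖iteratedFDeriv ℝ N (Real.exp ∘ u) x‖
      ≤ N ! * Real.exp (u x) * D ^ N :=
        norm_iteratedFDeriv_comp_le Real.contDiff_exp hu.1 (mod_cast le_top) x hexp huD
    _ ≤ n ! * Real.exp (u x) * D ^ n := by gcongr
    _ = n ! * A ^ n * ((1 + ‖x‖) ^ (k * n) * Real.exp (u x)) := by
        rw [mul_pow, ← pow_mul]; ring

theorem hasTemperateGrowth_sqrt_one_add_norm_sq :
    (fun x : H => √(1 + ‖x‖ ^ 2)).HasTemperateGrowth := by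
  simpa only [Real.sqrt_eq_rpow] using hasTemperateGrowth_one_add_norm_sq_rpow H (1 / 2)

theorem exists_norm_iteratedFDeriv_exp_mul_sqrt_le (s : ℝ) (n : ℕ) :
    ∃ (k : ℕ) (C : ℝ), 0 ≤ C ∧ ∀ N ≤ n, ∀ x : H,
      ‖iteratedFDeriv ℝ N (fun y => Real.exp (s * √(1 + ‖y‖ ^ 2))) x‖ ≤
        C * ((1 + ‖x‖) ^ k * Real.exp (s * √(1 + ‖x‖ ^ 2))) :=
  HasTemperateGrowth.norm_iteratedFDeriv_exp_le (u := fun x => s * √(1 + ‖x‖ ^ 2))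
    ((HasTemperateGrowth.const s).mul hasTemperateGrowth_sqrt_one_add_norm_sq) n

theorem exists_schwartzMap_eq_exp_mul_sqrt_smul {f : H → F} (hf : ContDiff ℝ ∞ f) {r r' : ℝ}
    (hr : 0 ≤ r) (hrr' : r < r')
    (hdecay : ∀ i, ∃ C > 0, ∀ x, ‖iteratedFDeriv ℝ i f x‖ ≤ C * Real.exp (-r' * ‖x‖)) :
    ∃ g : 𝓢(H, F), ∀ x, g x = Real.exp (r * √(1 + ‖x‖ ^ 2)) • f x := by
  choose Cf hCf_pos hCf using hdecay
  have hw : ContDiff ℝ ∞ fun x : H => Real.exp (r * √(1 + ‖x‖ ^ 2)) :=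
    (contDiff_const.mul hasTemperateGrowth_sqrt_one_add_norm_sq.1).exp
  refine ⟨⟨fun x => Real.exp (r * √(1 + ‖x‖ ^ 2)) • f x, hw.smul hf, fun k n => ?_⟩, fun x => rfl⟩
  obtain ⟨m, Cw, hCw_nonneg, hCw⟩ := exists_norm_iteratedFDeriv_exp_mul_sqrt_le (H := H) r n
  obtain ⟨P, hP⟩ := exists_one_add_pow_mul_exp_le hrr' (k + m)
  set K := ∑ i ∈ range (n + 1), n.choose i * Cw * Cf (n - i)
  have hK : 0 ≤ K := sum_nonneg fun i _ => by have := hCf_pos (n - i); positivity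
  refine ⟨K * (Real.exp r * P), fun x => ?_⟩
  have hweight : ‖x‖ ^ k * ((1 + ‖x‖) ^ m * Real.exp (r * √(1 + ‖x‖ ^ 2))) *
      Real.exp (-r' * ‖x‖) ≤ Real.exp r * P := by
    have hsqrt : Real.exp (r * √(1 + ‖x‖ ^ 2)) ≤ Real.exp r * Real.exp (r * ‖x‖) := by
      rw [← Real.exp_add, ← mul_one_add]
      gcongr
      exact sqrt_one_add_norm_sq_le x
    calc ‖x‖ ^ k * ((1 + ‖x‖) ^ m * Real.exp (r * √(1 + ‖x‖ ^ 2))) * Real.exp (-r' * ‖x‖)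
        ≤ (1 + ‖x‖) ^ k * ((1 + ‖x‖) ^ m * (Real.exp r * Real.exp (r * ‖x‖))) *
            Real.exp (-r' * ‖x‖) := by gcongr; simp
      _ = Real.exp r * (((1 + ‖x‖) ^ (k + m) * Real.exp (r * ‖x‖)) * Real.exp (-r' * ‖x‖)) := by
          ring
      _ ≤ Real.exp r * ((P * Real.exp (r' * ‖x‖)) * Real.exp (-r' * ‖x‖)) := by
          gcongr Real.exp r * (?_ * _)
          exact hP _ (norm_nonneg x)
      _ = Real.exp r * P := by
          rw [mul_assoc, ← Real.exp_add, neg_mul, add_neg_cancel, Real.exp_zero, mul_one]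
  calc ‖x‖ ^ k * ‖iteratedFDeriv ℝ n (fun x => Real.exp (r * √(1 + ‖x‖ ^ 2)) • f x) x‖
      ≤ ‖x‖ ^ k * (K * (((1 + ‖x‖) ^ m * Real.exp (r * √(1 + ‖x‖ ^ 2))) *
          Real.exp (-r' * ‖x‖))) := by
        gcongr
        exact norm_iteratedFDeriv_smul_le_of_le hw hf (fun i hi => hCw i hi x)
          (fun i _ => hCf i x)
    _ = K * (‖x‖ ^ k * ((1 + ‖x‖) ^ m * Real.exp (r * √(1 + ‖x‖ ^ 2))) *
          Real.exp (-r' * ‖x‖)) := by ring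
    _ ≤ K * (Real.exp r * P) := by gcongr

theorem exists_norm_iteratedFDeriv_exp_neg_mul_sqrt_smul_le (g : 𝓢(H, F)) {r r' : ℝ}
    (hr' : 0 ≤ r') (hrr' : r < r') (k : ℕ) :
    ∃ C > 0, ∀ x, ‖iteratedFDeriv ℝ k (fun y => Real.exp (-r' * √(1 + ‖y‖ ^ 2)) • g y) x‖ ≤
      C * Real.exp (-r * ‖x‖) := by
  obtain ⟨m, Cw, hCw_nonneg, hCw⟩ := exists_norm_iteratedFDeriv_exp_mul_sqrt_le (H := H) (-r') k
  obtain ⟨P, hP⟩ := exists_one_add_pow_mul_exp_le (neg_lt_neg hrr') m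
  set K := ∑ i ∈ range (k + 1), k.choose i * Cw * SchwartzMap.seminorm ℝ 0 (k - i) g
  have hK : 0 ≤ K := sum_nonneg fun i _ => by positivity
  refine ⟨max (K * P) 1, by positivity, fun x => ?_⟩
  have hw : ContDiff ℝ ∞ fun x : H => Real.exp (-r' * √(1 + ‖x‖ ^ 2)) :=
    (contDiff_const.mul hasTemperateGrowth_sqrt_one_add_norm_sq.1).exp
  calc ‖iteratedFDeriv ℝ k (fun y => Real.exp (-r' * √(1 + ‖y‖ ^ 2)) • g y) x‖
      ≤ K * (((1 + ‖x‖) ^ m * Real.exp (-r' * √(1 + ‖x‖ ^ 2))) * 1) :=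
        norm_iteratedFDeriv_smul_le_of_le hw g.smooth' (fun i hi => hCw i hi x)
          (fun i _ => (g.norm_iteratedFDeriv_le_seminorm ℝ i x).trans_eq (mul_one _).symm)
    _ ≤ K * ((1 + ‖x‖) ^ m * Real.exp (-r' * ‖x‖)) := by
        have hsqrt : ‖x‖ ≤ √(1 + ‖x‖ ^ 2) := Real.le_sqrt_of_sq_le (by linarith)
        rw [mul_one]
        gcongr _ * (_ * Real.exp ?_)
        nlinarith
    _ ≤ K * (P * Real.exp (-r * ‖x‖)) := by
        gcongr K * ?_
        exact hP _ (norm_nonneg x)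
    _ ≤ max (K * P) 1 * Real.exp (-r * ‖x‖) := by
        rw [← mul_assoc]; gcongr; exact le_max_left _ _

end

theorem exp_decay_derivs_iff_schwartz_mul_exp_general
    (d : ℕ) (R : ℝ) (f : EuclideanSpace ℝ (Fin d) → ℂ)
    (hf : ContDiff ℝ (⊤ : ℕ∞) f) :
    (∀ r : ℝ, 0 < r → r < R → ∀ k : ℕ, ∃ C > 0, ∀ v : EuclideanSpace ℝ (Fin d),
        ‖iteratedFDeriv ℝ k f v‖ ≤ C * Real.exp (-r * ‖v‖)) ↔
    (∀ r : ℝ, 0 < r → r < R →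
        ∃ g : SchwartzMap (EuclideanSpace ℝ (Fin d)) ℂ,
          ∀ v : EuclideanSpace ℝ (Fin d),
            g v = f v * ↑(Real.exp (r * Real.sqrt (1 + ‖v‖ ^ 2)))) := by
  constructor
  · intro hdecay r hr hrR
    obtain ⟨g, hg⟩ := exists_schwartzMap_eq_exp_mul_sqrt_smul hf hr.le (r' := (r + R) / 2)
      (by linarith) (hdecay _ (by linarith) (by linarith))
    exact ⟨g, fun v => by rw [hg v, Complex.real_smul, mul_comm]⟩
  · intro hschwartz r hr hrR k
    obtain ⟨g, hg⟩ := hschwartz ((r + R) / 2) (by linarith) (by linarith)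
    have hfg : f = fun v => Real.exp (-((r + R) / 2) * √(1 + ‖v‖ ^ 2)) • g v := by
      funext v
      rw [Complex.real_smul, hg v, mul_left_comm, ← Complex.ofReal_mul, ← Real.exp_add, neg_mul,
        neg_add_cancel, Real.exp_zero, Complex.ofReal_one, mul_one]
    rw [hfg]
    exact exists_norm_iteratedFDeriv_exp_neg_mul_sqrt_smul_le g (by linarith) (by linarith) k

/-- For a smooth function `f : ℝ^d → ℂ` and `R > 0`, the following are equivalent:
(1) all iterated derivatives of `f` decay like `exp (-r‖v‖)` for every `r < R`;
(2) for every `r < R`, `f(v) · exp (r √(1 + ‖v‖²))` is a Schwartz function. -/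
theorem exp_decay_derivs_iff_schwartz_mul_exp
    (d : ℕ) (R : ℝ) (hR : 0 < R) (f : EuclideanSpace ℝ (Fin d) → ℂ)
    (hf : ContDiff ℝ (⊤ : ℕ∞) f) :
    (∀ r : ℝ, 0 < r → r < R → ∀ k : ℕ, ∃ C > 0, ∀ v : EuclideanSpace ℝ (Fin d),
        ‖iteratedFDeriv ℝ k f v‖ ≤ C * Real.exp (-r * ‖v‖)) ↔
    (∀ r : ℝ, 0 < r → r < R →
        ∃ g : SchwartzMap (EuclideanSpace ℝ (Fin d)) ℂ,
          ∀ v : EuclideanSpace ℝ (Fin d),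
            g v = f v * ↑(Real.exp (r * Real.sqrt (1 + ‖v‖ ^ 2)))) :=
  exp_decay_derivs_iff_schwartz_mul_exp_general d R f hf
end

section
/- Fix d ∈ ℕ and R > 0, and let f : ℝ^d → ℂ be a smooth function such that for every r with 0 < r < R and every k ∈ ℕ there exists C > 0 with ‖iteratedFDeriv ℝ k f v‖ ≤ C · exp(−r·‖v‖) for all v ∈ ℝ^d. Then: (a) for every λ ∈ ℂ^d with ‖Re λ‖ < R the function v ↦ f(v)·exp(⟨λ, v⟩) is integrable on ℝ^d, so F(λ) := ∫_{ℝ^d} f(v)·exp(⟨λ, v⟩) dv is defined; (b) F is holomorphic (complex Fréchet differentiable) on the open tube {λ ∈ ℂ^d : ‖Re λ‖ < R}; and (c) for every r with 0 < r < R and every N ∈ ℕ, sup { |F(λ)|·(1 + ‖λ‖)^N : λ ∈ ℂ^d, ‖Re λ‖ ≤ r } < ∞. -/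
/-!
On the tube `‖Re λ‖ ≤ s < R` the integrand `g v * exp ⟨λ, v⟩` is dominated by
`C * exp (-(R - s) / 2 * ‖v‖)`, which is integrable on `ℝ^d`; this gives integrability,
a uniform bound on the transform, and, by differentiation under the integral sign, holomorphy.
Integration by parts gives `λᵢ * F g λ = -F (∂ᵢ g) λ`, and `∂ᵢ g` satisfies the same decay
hypotheses as `g`, so induction on `N` bounds `(1 + ‖λ‖) ^ N * ‖F g λ‖`.
-/

open MeasureTheory

/-- The componentwise real part of a vector in `ℂ^d`, as a vector of `ℝ^d`. -/
noncomputable def reVec (d : ℕ) (lam : EuclideanSpace ℂ (Fin d)) :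
    EuclideanSpace ℝ (Fin d) :=
  (EuclideanSpace.equiv (Fin d) ℝ).symm fun i => (lam i).re

open Module
open scoped Nat ContDiff

lemma one_add_pow_mul_exp_neg_le {δ t : ℝ} (hδ : 0 < δ) (ht : 0 ≤ t) (n : ℕ) :
    (1 + t) ^ n * Real.exp (-δ * t) ≤ n ! * Real.exp δ / δ ^ n := by
  have h := Real.pow_div_factorial_le_exp (x := δ * (1 + t)) (by positivity) n
  have hexp : Real.exp (δ * (1 + t)) * Real.exp (-δ * t) = Real.exp δ := by
    rw [← Real.exp_add]; ring_nf
  rw [le_div_iff₀ (by positivity)]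
  calc (1 + t) ^ n * Real.exp (-δ * t) * δ ^ n
      = (δ * (1 + t)) ^ n / n ! * Real.exp (-δ * t) * n ! := by
        rw [mul_pow]; field_simp
    _ ≤ Real.exp (δ * (1 + t)) * Real.exp (-δ * t) * n ! := by gcongr
    _ = n ! * Real.exp δ := by rw [hexp, mul_comm]

section FiniteDimensional

variable {E : Type*} [NormedAddCommGroup E] [NormedSpace ℝ E] [FiniteDimensional ℝ E]
  [MeasurableSpace E] [BorelSpace E] (μ : Measure E) [μ.IsAddHaarMeasure]

lemma integrable_pow_norm_mul_exp_neg_mul_norm (n : ℕ) {δ : ℝ} (hδ : 0 < δ) :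
    Integrable (fun v : E => ‖v‖ ^ n * Real.exp (-δ * ‖v‖)) μ := by
  set m := finrank ℝ E + 1
  have hm : (finrank ℝ E : ℝ) < m := by simp [m]
  refine ((integrable_one_add_norm hm).const_mul ((n + m) ! * Real.exp δ / δ ^ (n + m))).mono'
    (by fun_prop) (ae_of_all _ fun v => ?_)
  have h1 : 0 < 1 + ‖v‖ := by positivity
  rw [Real.norm_of_nonneg (by positivity), Real.rpow_neg h1.le, Real.rpow_natCast,
    ← div_eq_mul_inv, le_div_iff₀ (by positivity)]
  calc ‖v‖ ^ n * Real.exp (-δ * ‖v‖) * (1 + ‖v‖) ^ m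
      ≤ (1 + ‖v‖) ^ n * Real.exp (-δ * ‖v‖) * (1 + ‖v‖) ^ m := by
        gcongr; linarith
    _ = (1 + ‖v‖) ^ (n + m) * Real.exp (-δ * ‖v‖) := by ring
    _ ≤ _ := one_add_pow_mul_exp_neg_le hδ (norm_nonneg v) _

lemma integrable_exp_neg_mul_norm {δ : ℝ} (hδ : 0 < δ) :
    Integrable (fun v : E => Real.exp (-δ * ‖v‖)) μ := by
  simpa using integrable_pow_norm_mul_exp_neg_mul_norm μ 0 hδ

end FiniteDimensional

section ExpDecay

variable {E F : Type*} [NormedAddCommGroup E] [NormedSpace ℝ E]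
  [NormedAddCommGroup F] [NormedSpace ℝ F]

def HasExpDecayDerivs (R : ℝ) (g : E → F) : Prop :=
  ContDiff ℝ ∞ g ∧ ∀ r : ℝ, 0 < r → r < R → ∀ k : ℕ, ∃ C : ℝ,
    ∀ v, ‖iteratedFDeriv ℝ k g v‖ ≤ C * Real.exp (-r * ‖v‖)

namespace HasExpDecayDerivs

variable {R r : ℝ} {g : E → F}

lemma norm_le (hg : HasExpDecayDerivs R g) (hr : 0 < r) (hrR : r < R) :
    ∃ C : ℝ, ∀ v, ‖g v‖ ≤ C * Real.exp (-r * ‖v‖) := by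
  simpa only [norm_iteratedFDeriv_zero] using hg.2 r hr hrR 0

lemma fderiv_apply (hg : HasExpDecayDerivs R g) (w : E) :
    HasExpDecayDerivs R (fun v => fderiv ℝ g v w) := by
  have hg' : ContDiff ℝ ∞ (fderiv ℝ g) := hg.1.fderiv_right (by simp)
  refine ⟨hg'.clm_apply contDiff_const, fun r hr hrR k => ?_⟩
  obtain ⟨C, hC⟩ := hg.2 r hr hrR (k + 1)
  refine ⟨‖w‖ * C, fun v => ?_⟩
  calc ‖iteratedFDeriv ℝ k (fun v => fderiv ℝ g v w) v‖
      ≤ ‖w‖ * ‖iteratedFDeriv ℝ k (fderiv ℝ g) v‖ :=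
        norm_iteratedFDeriv_clm_apply_const hg'.contDiffAt (by exact_mod_cast le_top)
    _ ≤ ‖w‖ * (C * Real.exp (-r * ‖v‖)) := by
        rw [norm_iteratedFDeriv_fderiv]; gcongr; exact hC v
    _ = ‖w‖ * C * Real.exp (-r * ‖v‖) := by ring

end HasExpDecayDerivs

end ExpDecay

section Pairing

variable {d : ℕ}

lemma reVec_apply (lam : EuclideanSpace ℂ (Fin d)) (i : Fin d) :
    reVec d lam i = (lam i).re := rfl

lemma reVec_sub (lam mu : EuclideanSpace ℂ (Fin d)) :
    reVec d (lam - mu) = reVec d lam - reVec d mu := by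
  ext i; simp [reVec_apply]

lemma norm_reVec_le (lam : EuclideanSpace ℂ (Fin d)) : ‖reVec d lam‖ ≤ ‖lam‖ := by
  simp only [EuclideanSpace.norm_eq, reVec_apply, Real.norm_eq_abs]
  gcongr with i
  exact Complex.abs_re_le_norm (lam i)

lemma norm_le_sum_norm_apply (lam : EuclideanSpace ℂ (Fin d)) : ‖lam‖ ≤ ∑ i, ‖lam i‖ := by
  rw [EuclideanSpace.norm_eq, Real.sqrt_le_left (by positivity)]
  exact Finset.sum_sq_le_sq_sum_of_nonneg fun i _ => norm_nonneg _

def pairing (lam : EuclideanSpace ℂ (Fin d)) (v : EuclideanSpace ℝ (Fin d)) : ℂ :=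
  ∑ i, lam i * (v i : ℂ)

lemma norm_pairing_le (lam : EuclideanSpace ℂ (Fin d)) (v : EuclideanSpace ℝ (Fin d)) :
    ‖pairing lam v‖ ≤ ‖lam‖ * ‖v‖ := by
  calc ‖pairing lam v‖ ≤ ∑ i, ‖lam i‖ * ‖v i‖ := by
        simpa [pairing] using norm_sum_le _ fun i => lam i * (v i : ℂ)
    _ ≤ ‖lam‖ * ‖v‖ := by
        simpa only [EuclideanSpace.norm_eq] using Real.sum_mul_le_sqrt_mul_sqrt _ _ _

lemma re_pairing (lam : EuclideanSpace ℂ (Fin d)) (v : EuclideanSpace ℝ (Fin d)) :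
    (pairing lam v).re = inner ℝ (reVec d lam) v := by
  simp [pairing, PiLp.inner_apply, reVec_apply, Complex.re_sum, mul_comm]

lemma norm_cexp_pairing_le (lam : EuclideanSpace ℂ (Fin d)) (v : EuclideanSpace ℝ (Fin d)) :
    ‖Complex.exp (pairing lam v)‖ ≤ Real.exp (‖reVec d lam‖ * ‖v‖) := by
  rw [Complex.norm_exp, re_pairing]
  exact Real.exp_le_exp.2 (real_inner_le_norm _ _)

lemma pairing_single (lam : EuclideanSpace ℂ (Fin d)) (i : Fin d) :
    pairing lam (EuclideanSpace.single i 1) = lam i := by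
  simp [pairing, apply_ite]

noncomputable def pairingCLM (lam : EuclideanSpace ℂ (Fin d)) :
    EuclideanSpace ℝ (Fin d) →L[ℝ] ℂ :=
  ∑ i, lam i • Complex.ofRealCLM.comp (EuclideanSpace.proj i)

@[simp] lemma pairingCLM_apply (lam : EuclideanSpace ℂ (Fin d)) (v : EuclideanSpace ℝ (Fin d)) :
    pairingCLM lam v = pairing lam v := by
  simp [pairingCLM, pairing]

noncomputable def pairingDualCLM (v : EuclideanSpace ℝ (Fin d)) :
    EuclideanSpace ℂ (Fin d) →L[ℂ] ℂ :=
  ∑ i, (v i : ℂ) • EuclideanSpace.proj i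

@[simp] lemma pairingDualCLM_apply (v : EuclideanSpace ℝ (Fin d)) (lam : EuclideanSpace ℂ (Fin d)) :
    pairingDualCLM v lam = pairing lam v := by
  simp [pairingDualCLM, pairing, mul_comm]

lemma norm_pairingDualCLM_le (v : EuclideanSpace ℝ (Fin d)) : ‖pairingDualCLM v‖ ≤ ‖v‖ :=
  ContinuousLinearMap.opNorm_le_bound _ (norm_nonneg v) fun lam => by
    rw [pairingDualCLM_apply, mul_comm]; exact norm_pairing_le lam v

lemma continuous_pairingDualCLM : Continuous (pairingDualCLM (d := d)) := by
  unfold pairingDualCLM; fun_prop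

lemma hasFDerivAt_cexp_pairing (lam : EuclideanSpace ℂ (Fin d)) (v : EuclideanSpace ℝ (Fin d)) :
    HasFDerivAt (fun v => Complex.exp (pairing lam v))
      (Complex.exp (pairing lam v) • pairingCLM lam) v := by
  simpa using (pairingCLM lam).hasFDerivAt.cexp

lemma hasFDerivAt_cexp_pairing_left (lam : EuclideanSpace ℂ (Fin d))
    (v : EuclideanSpace ℝ (Fin d)) :
    HasFDerivAt (fun lam => Complex.exp (pairing lam v))
      (Complex.exp (pairing lam v) • pairingDualCLM v) lam := by
  simpa using (pairingDualCLM v).hasFDerivAt.cexp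

lemma continuous_cexp_pairing (lam : EuclideanSpace ℂ (Fin d)) :
    Continuous fun v => Complex.exp (pairing lam v) := by
  simpa using (pairingCLM lam).continuous.cexp

noncomputable def fourierLaplace (g : EuclideanSpace ℝ (Fin d) → ℂ)
    (lam : EuclideanSpace ℂ (Fin d)) : ℂ :=
  ∫ v, g v * Complex.exp (pairing lam v)

lemma norm_mul_cexp_pairing_le {g : EuclideanSpace ℝ (Fin d) → ℂ} {C r s : ℝ}
    (hg : ∀ v, ‖g v‖ ≤ C * Real.exp (-r * ‖v‖)) {lam : EuclideanSpace ℂ (Fin d)}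
    (hlam : ‖reVec d lam‖ ≤ s) (v : EuclideanSpace ℝ (Fin d)) :
    ‖g v * Complex.exp (pairing lam v)‖ ≤ C * Real.exp (-(r - s) * ‖v‖) := by
  have hC : 0 ≤ C := by simpa using (norm_nonneg _).trans (hg 0)
  calc ‖g v * Complex.exp (pairing lam v)‖
      ≤ C * Real.exp (-r * ‖v‖) * Real.exp (s * ‖v‖) := by
        rw [norm_mul]
        gcongr
        · exact hg v
        · exact (norm_cexp_pairing_le lam v).trans (by gcongr)
    _ = C * Real.exp (-(r - s) * ‖v‖) := by
        rw [mul_assoc, ← Real.exp_add]; ring_nf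

namespace HasExpDecayDerivs

variable {R s : ℝ} {g : EuclideanSpace ℝ (Fin d) → ℂ}

lemma exists_norm_mul_cexp_pairing_le (hg : HasExpDecayDerivs R g) (hs : 0 ≤ s) (hsR : s < R) :
    ∃ C : ℝ, ∀ lam, ‖reVec d lam‖ ≤ s →
      ∀ v, ‖g v * Complex.exp (pairing lam v)‖ ≤ C * Real.exp (-((R - s) / 2) * ‖v‖) := by
  obtain ⟨C, hC⟩ := hg.norm_le (r := (s + R) / 2) (by linarith) (by linarith)
  refine ⟨C, fun lam hlam v => (norm_mul_cexp_pairing_le hC hlam v).trans_eq ?_⟩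
  ring_nf

lemma integrable_mul_cexp_pairing (hg : HasExpDecayDerivs R g)
    {lam : EuclideanSpace ℂ (Fin d)} (hlam : ‖reVec d lam‖ < R) :
    Integrable fun v => g v * Complex.exp (pairing lam v) := by
  obtain ⟨C, hC⟩ := hg.exists_norm_mul_cexp_pairing_le (norm_nonneg _) hlam
  have hδ : 0 < (R - ‖reVec d lam‖) / 2 := by linarith
  refine ((integrable_exp_neg_mul_norm volume hδ).const_mul C).mono' ?_
    (ae_of_all _ (hC lam le_rfl))
  exact (hg.1.continuous.mul (continuous_cexp_pairing lam)).aestronglyMeasurable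

lemma differentiableAt_fourierLaplace (hg : HasExpDecayDerivs R g)
    {lam₀ : EuclideanSpace ℂ (Fin d)} (hlam₀ : ‖reVec d lam₀‖ < R) :
    DifferentiableAt ℂ (fourierLaplace g) lam₀ := by
  set ε := (R - ‖reVec d lam₀‖) / 2
  have hε : 0 < ε := by simp only [ε]; linarith
  obtain ⟨C, hC⟩ := hg.exists_norm_mul_cexp_pairing_le (s := ‖reVec d lam₀‖ + ε)
    (add_nonneg (norm_nonneg _) hε.le) (by simp only [ε]; linarith)
  have hball : ∀ lam ∈ Metric.ball lam₀ ε, ‖reVec d lam‖ ≤ ‖reVec d lam₀‖ + ε := fun lam hlam => by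
    have := norm_reVec_le (lam - lam₀)
    rw [reVec_sub] at this
    linarith [norm_le_insert' (reVec d lam) (reVec d lam₀), mem_ball_iff_norm.1 hlam]
  have hdom : ∀ v, ∀ lam ∈ Metric.ball lam₀ ε,
      ‖(g v * Complex.exp (pairing lam v)) • pairingDualCLM v‖ ≤
        C * (‖v‖ ^ 1 * Real.exp (-(ε / 2) * ‖v‖)) := fun v lam hlam => by
    rw [norm_smul, pow_one]
    calc _ ≤ C * Real.exp (-((R - (‖reVec d lam₀‖ + ε)) / 2) * ‖v‖) * ‖v‖ := by
          have hlam := hC lam (hball lam hlam) v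
          exact mul_le_mul hlam (norm_pairingDualCLM_le v) (norm_nonneg _)
            ((norm_nonneg _).trans hlam)
      _ = _ := by simp only [ε]; ring_nf
  refine (hasFDerivAt_integral_of_dominated_of_fderiv_le
    (F := fun lam v => g v * Complex.exp (pairing lam v)) (Metric.ball_mem_nhds lam₀ hε)
    (.of_forall fun lam => (hg.1.continuous.mul (continuous_cexp_pairing lam)).aestronglyMeasurable)
    (hg.integrable_mul_cexp_pairing hlam₀) ?_ (ae_of_all _ hdom)
    ((integrable_pow_norm_mul_exp_neg_mul_norm volume 1 (half_pos hε)).const_mul C)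
    (ae_of_all _ fun v lam _ => ?_)).differentiableAt
  · exact ((hg.1.continuous.mul (continuous_cexp_pairing lam₀)).smul
      continuous_pairingDualCLM).aestronglyMeasurable
  · simpa only [smul_smul] using (hasFDerivAt_cexp_pairing_left lam v).const_mul (g v)

lemma fourierLaplace_fderiv_apply (hg : HasExpDecayDerivs R g)
    {lam : EuclideanSpace ℂ (Fin d)} (hlam : ‖reVec d lam‖ < R) (w : EuclideanSpace ℝ (Fin d)) :
    fourierLaplace (fun v => fderiv ℝ g v w) lam = -(pairing lam w * fourierLaplace g lam) := by
  have hderiv : ∀ v, fderiv ℝ (fun v => Complex.exp (pairing lam v)) v w =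
      Complex.exp (pairing lam v) * pairing lam w := fun v => by
    simp [(hasFDerivAt_cexp_pairing lam v).fderiv]
  have hint := hg.integrable_mul_cexp_pairing hlam
  have hibp := integral_mul_fderiv_eq_neg_fderiv_mul_of_integrable (μ := volume) (v := w)
    ((hg.fderiv_apply w).integrable_mul_cexp_pairing hlam)
    (by simpa only [hderiv, ← mul_assoc] using hint.mul_const (pairing lam w)) hint
    (fun v _ => hg.1.differentiable (by simp) v)
    (fun v _ => (hasFDerivAt_cexp_pairing lam v).differentiableAt)
  simp only [hderiv, ← mul_assoc, integral_mul_const] at hibp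
  unfold fourierLaplace
  linear_combination hibp

lemma exists_norm_fourierLaplace_le (hg : HasExpDecayDerivs R g) (hs : 0 ≤ s) (hsR : s < R) :
    ∃ C : ℝ, ∀ lam, ‖reVec d lam‖ ≤ s → ‖fourierLaplace g lam‖ ≤ C := by
  obtain ⟨C, hC⟩ := hg.exists_norm_mul_cexp_pairing_le hs hsR
  exact ⟨_, fun lam hlam => norm_integral_le_of_norm_le
    ((integrable_exp_neg_mul_norm volume (by linarith : 0 < (R - s) / 2)).const_mul C)
    (ae_of_all _ (hC lam hlam))⟩

lemma exists_one_add_norm_pow_mul_fourierLaplace_le (hg : HasExpDecayDerivs R g) (hs : 0 ≤ s)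
    (hsR : s < R) (N : ℕ) :
    ∃ C : ℝ, ∀ lam, ‖reVec d lam‖ ≤ s → (1 + ‖lam‖) ^ N * ‖fourierLaplace g lam‖ ≤ C := by
  induction N generalizing g with
  | zero => simpa using hg.exists_norm_fourierLaplace_le hs hsR
  | succ N ih =>
    obtain ⟨C₀, hC₀⟩ := ih hg
    choose C hC using fun i : Fin d => ih (hg.fderiv_apply (EuclideanSpace.single i 1))
    refine ⟨C₀ + ∑ i, C i, fun lam hlam => ?_⟩
    have hcoord : ∀ i, ‖lam i‖ * ‖fourierLaplace g lam‖ =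
        ‖fourierLaplace (fun v => fderiv ℝ g v (EuclideanSpace.single i 1)) lam‖ := fun i => by
      rw [hg.fourierLaplace_fderiv_apply (hlam.trans_lt hsR), pairing_single, norm_neg, norm_mul]
    calc (1 + ‖lam‖) ^ (N + 1) * ‖fourierLaplace g lam‖
        ≤ (1 + ∑ i, ‖lam i‖) * ((1 + ‖lam‖) ^ N * ‖fourierLaplace g lam‖) := by
          rw [pow_succ', mul_assoc]
          gcongr
          exact norm_le_sum_norm_apply lam
      _ = (1 + ‖lam‖) ^ N * ‖fourierLaplace g lam‖ + ∑ i, (1 + ‖lam‖) ^ N *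
            ‖fourierLaplace (fun v => fderiv ℝ g v (EuclideanSpace.single i 1)) lam‖ := by
          simp only [← hcoord, add_mul, one_mul, Finset.sum_mul]
          ring_nf
      _ ≤ C₀ + ∑ i, C i := by
          gcongr with i
          exacts [hC₀ lam hlam, hC i lam hlam]

end HasExpDecayDerivs

end Pairing

theorem fourierLaplace_of_exp_decay_general
    (d : ℕ) (R : ℝ) (f : EuclideanSpace ℝ (Fin d) → ℂ)
    (hf : ContDiff ℝ (⊤ : ℕ∞) f)
    (hbound : ∀ r : ℝ, 0 < r → r < R → ∀ k : ℕ, ∃ C > 0,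
      ∀ v : EuclideanSpace ℝ (Fin d),
        ‖iteratedFDeriv ℝ k f v‖ ≤ C * Real.exp (-r * ‖v‖)) :
    (∀ lam : EuclideanSpace ℂ (Fin d), ‖reVec d lam‖ < R →
        Integrable (fun v : EuclideanSpace ℝ (Fin d) =>
          f v * Complex.exp (∑ i, lam i * (v i : ℂ)))) ∧
    DifferentiableOn ℂ
      (fun lam : EuclideanSpace ℂ (Fin d) =>
        ∫ v : EuclideanSpace ℝ (Fin d), f v * Complex.exp (∑ i, lam i * (v i : ℂ)))
      {lam : EuclideanSpace ℂ (Fin d) | ‖reVec d lam‖ < R} ∧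
    (∀ r : ℝ, 0 < r → r < R → ∀ N : ℕ, ∃ C : ℝ,
      ∀ lam : EuclideanSpace ℂ (Fin d), ‖reVec d lam‖ ≤ r →
        ‖∫ v : EuclideanSpace ℝ (Fin d), f v * Complex.exp (∑ i, lam i * (v i : ℂ))‖ *
          (1 + ‖lam‖) ^ N ≤ C) := by
  have hf' : HasExpDecayDerivs R f :=
    ⟨hf, fun r hr hrR k => (hbound r hr hrR k).imp fun _ hC => hC.2⟩
  refine ⟨fun lam hlam => hf'.integrable_mul_cexp_pairing hlam,
    fun lam hlam => (hf'.differentiableAt_fourierLaplace hlam).differentiableWithinAt,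
    fun r hr hrR N => ?_⟩
  obtain ⟨C, hC⟩ := hf'.exists_one_add_norm_pow_mul_fourierLaplace_le hr.le hrR N
  exact ⟨C, fun lam hlam => (mul_comm _ _).trans_le (hC lam hlam)⟩

/-- If `f : ℝ^d → ℂ` is smooth with all derivatives decaying like `exp (-r‖v‖)` for every
`r < R`, then the Laplace/Fourier transform `F(λ) = ∫ f(v) exp⟨λ, v⟩ dv`
(a) is defined (the integrand is integrable) for `‖Re λ‖ < R`,
(b) is holomorphic on the tube `{λ : ‖Re λ‖ < R}`, and
(c) decays faster than any inverse polynomial, uniformly on `{λ : ‖Re λ‖ ≤ r}`, `r < R`. -/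
theorem fourierLaplace_of_exp_decay
    (d : ℕ) (R : ℝ) (hR : 0 < R) (f : EuclideanSpace ℝ (Fin d) → ℂ)
    (hf : ContDiff ℝ (⊤ : ℕ∞) f)
    (hbound : ∀ r : ℝ, 0 < r → r < R → ∀ k : ℕ, ∃ C > 0,
      ∀ v : EuclideanSpace ℝ (Fin d),
        ‖iteratedFDeriv ℝ k f v‖ ≤ C * Real.exp (-r * ‖v‖)) :
    (∀ lam : EuclideanSpace ℂ (Fin d), ‖reVec d lam‖ < R →
        Integrable (fun v : EuclideanSpace ℝ (Fin d) =>
          f v * Complex.exp (∑ i, lam i * (v i : ℂ)))) ∧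
    DifferentiableOn ℂ
      (fun lam : EuclideanSpace ℂ (Fin d) =>
        ∫ v : EuclideanSpace ℝ (Fin d), f v * Complex.exp (∑ i, lam i * (v i : ℂ)))
      {lam : EuclideanSpace ℂ (Fin d) | ‖reVec d lam‖ < R} ∧
    (∀ r : ℝ, 0 < r → r < R → ∀ N : ℕ, ∃ C : ℝ,
      ∀ lam : EuclideanSpace ℂ (Fin d), ‖reVec d lam‖ ≤ r →
        ‖∫ v : EuclideanSpace ℝ (Fin d), f v * Complex.exp (∑ i, lam i * (v i : ℂ))‖ *
          (1 + ‖lam‖) ^ N ≤ C) :=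
  fourierLaplace_of_exp_decay_general d R f hf hbound
end

section
/- Let t ∈ ℂ with Re t > 0. Then the function x ↦ x^(t−1) · (1 + x²)^(−t) is integrable on (0, ∞) with respect to Lebesgue measure, and ∫_{0}^{∞} x^(t−1) · (1 + x²)^(−t) dx = Γ(t/2)² / (2·Γ(t)). Equivalently, 2·∫_{0}^{∞} (x/(1+x²))^t · x⁻¹ dx = Γ(t/2)²/Γ(t) = B(t/2, t/2), where B is the Beta function. -/
open MeasureTheory Set

/-!
The substitution `v = x² / (1 + x²)` maps `(0, ∞)` bijectively onto `(0, 1)`, with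
`1 - v = 1 / (1 + x²)` and `dv = 2x / (1 + x²)² dx`. It turns the Beta integrand
`v^(u-1) (1-v)^(w-1)` into `2 x^(2u-1) (1 + x²)^(-(u+w))`, so the latter integrates to
`B(u, w) / 2 = Γ(u) Γ(w) / (2 Γ(u + w))`; take `u = w = t / 2`.
-/

namespace Complex

lemma ofReal_sq_cpow {x : ℝ} (hx : 0 ≤ x) (s : ℂ) :
    ((x : ℂ) ^ 2) ^ s = (x : ℂ) ^ (2 * s) := by
  rw [← cpow_ofNat_mul'] <;> simp [arg_ofReal_of_nonneg hx, Real.pi_pos, Real.pi_pos.le]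

end Complex

open Complex

lemma hasDerivAt_sq_div_one_add_sq (x : ℝ) :
    HasDerivAt (fun y : ℝ => y ^ 2 / (1 + y ^ 2)) (2 * x / (1 + x ^ 2) ^ 2) x := by
  have hsq : HasDerivAt (fun y : ℝ => y ^ 2) (2 * x) x := by simpa using hasDerivAt_pow 2 x
  have hquot := hsq.div (hsq.const_add 1) (by positivity : (1 + x ^ 2) ≠ 0)
  rwa [show 2 * x * (1 + x ^ 2) - x ^ 2 * (2 * x) = 2 * x by ring] at hquot

lemma strictMonoOn_sq_div_one_add_sq :
    StrictMonoOn (fun y : ℝ => y ^ 2 / (1 + y ^ 2)) (Ici 0) := by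
  intro x hx y hy hxy
  simp only [mem_Ici] at hx hy
  rw [div_lt_div_iff₀ (by positivity) (by positivity)]
  nlinarith [mul_lt_mul'' hxy hxy hx hx]

lemma image_sq_div_one_add_sq_Ioi : (fun y : ℝ => y ^ 2 / (1 + y ^ 2)) '' Ioi 0 = Ioo 0 1 := by
  ext v
  constructor
  · rintro ⟨x, hx, rfl⟩
    have hx : 0 < x := hx
    exact ⟨by positivity, (div_lt_one (by positivity)).2 (by linarith)⟩
  · rintro ⟨hv0, hv1⟩
    have hratio : 0 < v / (1 - v) := div_pos hv0 (by linarith)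
    refine ⟨√(v / (1 - v)), Real.sqrt_pos.2 hratio, ?_⟩
    dsimp only
    rw [Real.sq_sqrt hratio.le]
    field_simp
    ring

section ChangeOfVariables

variable {E : Type*} [NormedAddCommGroup E] [NormedSpace ℝ E]

lemma integrableOn_Ioo_zero_one_iff_integrableOn_Ioi_comp_sq_div_one_add_sq (g : ℝ → E) :
    IntegrableOn g (Ioo 0 1) ↔
      IntegrableOn (fun x => |2 * x / (1 + x ^ 2) ^ 2| • g (x ^ 2 / (1 + x ^ 2))) (Ioi 0) := by
  rw [← image_sq_div_one_add_sq_Ioi]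
  exact integrableOn_image_iff_integrableOn_abs_deriv_smul measurableSet_Ioi
    (fun x _ => (hasDerivAt_sq_div_one_add_sq x).hasDerivWithinAt)
    (strictMonoOn_sq_div_one_add_sq.injOn.mono Ioi_subset_Ici_self) g

lemma integral_Ioo_zero_one_eq_integral_Ioi_comp_sq_div_one_add_sq (g : ℝ → E) :
    ∫ v in Ioo 0 1, g v =
      ∫ x in Ioi 0, |2 * x / (1 + x ^ 2) ^ 2| • g (x ^ 2 / (1 + x ^ 2)) := by
  rw [← image_sq_div_one_add_sq_Ioi]
  exact integral_image_eq_integral_abs_deriv_smul measurableSet_Ioi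
    (fun x _ => (hasDerivAt_sq_div_one_add_sq x).hasDerivWithinAt)
    (strictMonoOn_sq_div_one_add_sq.injOn.mono Ioi_subset_Ici_self) g

end ChangeOfVariables

lemma abs_deriv_smul_betaIntegrand_sq_div_one_add_sq {x : ℝ} (hx : 0 < x) (u w : ℂ) :
    |2 * x / (1 + x ^ 2) ^ 2| •
        (((x ^ 2 / (1 + x ^ 2) : ℝ) : ℂ) ^ (u - 1) *
          (1 - ((x ^ 2 / (1 + x ^ 2) : ℝ) : ℂ)) ^ (w - 1)) =
      2 * ((x : ℂ) ^ (2 * u - 1) * (1 + (x : ℂ) ^ 2) ^ (-(u + w))) := by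
  have hb : (0 : ℝ) < 1 + x ^ 2 := by positivity
  have hb_cast : ((1 + x ^ 2 : ℝ) : ℂ) = 1 + (x : ℂ) ^ 2 := by push_cast; rfl
  have hb0 : 1 + (x : ℂ) ^ 2 ≠ 0 := hb_cast ▸ ofReal_ne_zero.2 hb.ne'
  have hx0 : (x : ℂ) ≠ 0 := ofReal_ne_zero.2 hx.ne'
  have hbase : ((x ^ 2 / (1 + x ^ 2) : ℝ) : ℂ) ^ (u - 1) =
      (x : ℂ) ^ (2 * (u - 1)) / (1 + (x : ℂ) ^ 2) ^ (u - 1) := by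
    rw [ofReal_div, div_cpow_ofReal_nonneg (by positivity) hb.le, ofReal_pow,
      ofReal_sq_cpow hx.le, hb_cast]
  have hcompl : (1 - ((x ^ 2 / (1 + x ^ 2) : ℝ) : ℂ)) ^ (w - 1) =
      ((1 + (x : ℂ) ^ 2) ^ (w - 1))⁻¹ := by
    have hsub :
        (1 : ℂ) - ((x ^ 2 / (1 + x ^ 2) : ℝ) : ℂ) = ((1 + x ^ 2 : ℝ) : ℂ)⁻¹ := by
      rw [hb_cast]; push_cast; field_simp; ring
    rw [hsub, inv_cpow_ofReal_nonneg hb.le, hb_cast]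
  have hx_pow : (x : ℂ) ^ (2 * u - 1) = (x : ℂ) ^ (2 * (u - 1)) * x := by
    rw [show 2 * u - 1 = 2 * (u - 1) + 1 by ring, cpow_add _ _ hx0, cpow_one]
  have hb_pow : (1 + (x : ℂ) ^ 2) ^ (-(u + w)) =
      ((1 + (x : ℂ) ^ 2) ^ (u - 1) * (1 + (x : ℂ) ^ 2) ^ (w - 1) *
        (1 + (x : ℂ) ^ 2) ^ 2)⁻¹ := by
    rw [show -(u + w) = -(u - 1 + (w - 1) + 2) by ring, cpow_neg, cpow_add _ _ hb0,
      cpow_add _ _ hb0, cpow_two]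
  rw [abs_of_pos (by positivity), real_smul, hbase, hcompl, hx_pow, hb_pow]
  push_cast
  field_simp

lemma betaIntegral_eq_integral_Ioo (u w : ℂ) :
    betaIntegral u w =
      ∫ v in Ioo (0 : ℝ) 1, (v : ℂ) ^ (u - 1) * (1 - (v : ℂ)) ^ (w - 1) := by
  rw [betaIntegral, intervalIntegral.integral_of_le zero_le_one, integral_Ioc_eq_integral_Ioo]

lemma integrableOn_cpow_mul_one_add_sq_cpow {u w : ℂ} (hu : 0 < u.re) (hw : 0 < w.re) :
    IntegrableOn (fun x : ℝ => (x : ℂ) ^ (2 * u - 1) * (1 + (x : ℂ) ^ 2) ^ (-(u + w)))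
      (Ioi 0) := by
  have hbeta :
      IntegrableOn (fun v : ℝ => (v : ℂ) ^ (u - 1) * (1 - (v : ℂ)) ^ (w - 1)) (Ioo 0 1) :=
    ((intervalIntegrable_iff_integrableOn_Ioc_of_le zero_le_one).1
      (betaIntegral_convergent hu hw)).mono_set Ioo_subset_Ioc_self
  rw [integrableOn_Ioo_zero_one_iff_integrableOn_Ioi_comp_sq_div_one_add_sq] at hbeta
  exact (integrable_const_mul_iff (isUnit_iff_ne_zero.2 two_ne_zero) _).1 <| hbeta.congr_fun
    (fun x hx => abs_deriv_smul_betaIntegrand_sq_div_one_add_sq hx u w) measurableSet_Ioi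

lemma integral_cpow_mul_one_add_sq_cpow (u w : ℂ) :
    ∫ x in Ioi (0 : ℝ), (x : ℂ) ^ (2 * u - 1) * (1 + (x : ℂ) ^ 2) ^ (-(u + w)) =
      betaIntegral u w / 2 := by
  rw [betaIntegral_eq_integral_Ioo, integral_Ioo_zero_one_eq_integral_Ioi_comp_sq_div_one_add_sq,
    setIntegral_congr_fun measurableSet_Ioi
      (fun x hx => abs_deriv_smul_betaIntegrand_sq_div_one_add_sq hx u w), integral_const_mul]
  ring

lemma div_one_add_sq_cpow_mul_inv {x : ℝ} (hx : 0 < x) (t : ℂ) :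
    ((x : ℂ) / (1 + (x : ℂ) ^ 2)) ^ t * (x : ℂ)⁻¹ =
      (x : ℂ) ^ (t - 1) * (1 + (x : ℂ) ^ 2) ^ (-t) := by
  have hb_cast : ((1 + x ^ 2 : ℝ) : ℂ) = 1 + (x : ℂ) ^ 2 := by push_cast; rfl
  rw [← hb_cast, div_cpow_ofReal_nonneg hx.le (by positivity),
    cpow_sub _ _ (ofReal_ne_zero.2 hx.ne'), cpow_one, cpow_neg]
  ring

/-- For `Re t > 0`, `∫₀^∞ x^(t-1) (1+x²)^(-t) dx = Γ(t/2)² / (2 Γ(t))`; equivalently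
`2 ∫₀^∞ (x/(1+x²))^t x⁻¹ dx = Γ(t/2)²/Γ(t) = B(t/2, t/2)`. -/
theorem integral_rpow_one_add_sq_eq_beta (t : ℂ) (ht : 0 < t.re) :
    IntegrableOn
      (fun x : ℝ => (x : ℂ) ^ (t - 1) * ((1 : ℂ) + (x : ℂ) ^ 2) ^ (-t)) (Ioi 0) ∧
    (∫ x in Ioi (0 : ℝ), (x : ℂ) ^ (t - 1) * ((1 : ℂ) + (x : ℂ) ^ 2) ^ (-t)) =
      Complex.Gamma (t / 2) ^ 2 / (2 * Complex.Gamma t) ∧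
    2 * (∫ x in Ioi (0 : ℝ), ((x : ℂ) / (1 + (x : ℂ) ^ 2)) ^ t * (x : ℂ)⁻¹) =
      Complex.Gamma (t / 2) ^ 2 / Complex.Gamma t := by
  have ht2 : 0 < (t / 2).re := by simpa using half_pos ht
  have hint := integrableOn_cpow_mul_one_add_sq_cpow ht2 ht2
  have hval := integral_cpow_mul_one_add_sq_cpow (t / 2) (t / 2)
  rw [show 2 * (t / 2) - 1 = t - 1 by ring, show -(t / 2 + t / 2) = -t by ring] at hint hval
  have hgamma : ∫ x in Ioi (0 : ℝ), (x : ℂ) ^ (t - 1) * (1 + (x : ℂ) ^ 2) ^ (-t) =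
      Gamma (t / 2) ^ 2 / (2 * Gamma t) := by
    rw [hval, betaIntegral_eq_Gamma_mul_div _ _ ht2 ht2, add_halves]
    ring
  refine ⟨hint, hgamma, ?_⟩
  rw [setIntegral_congr_fun measurableSet_Ioi (fun x hx => div_one_add_sq_cpow_mul_inv hx t),
    hgamma]
  field_simp [Gamma_ne_zero_of_re_pos ht]
end
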